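/- arXiv:2506.00059 — 6 statements merged into one kernel-verified Lean document; each statement's English description precedes it below -/
import Mathlib

section
/- Let z : [0,∞) → [0,1]ⁿ be the trajectory of the SIS model with parameters (W, z(0), γ, π), and let 0 < T₀ ≤ T and v ∈ ℝⁿ. If ∫₀^{T₀} ⟨v, z(t)⟩² dt = 0, then ⟨v, z(t)⟩ = 0 for all t ≥ 0; in particular ∫₀^{T} ⟨v, z(t)⟩² dt = 0. Consequently the nullspace of the Gram matrix G(T), defined by G_{ij}(T) = ∫₀^T z_i(t) z_j(t) dt, is the same for every T > 0. -/
/-!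
The Gram matrix is the matrix of the quadratic form `w ↦ ∫₀^T ⟨w, z(t)⟩² dt`, which vanishes only
if the continuous function `⟨w, z⟩` vanishes on `[0, T]`. Since `z` is analytic on `[0, ∞)`, so is
`⟨w, z⟩`, and by the identity theorem vanishing on `[0, T]` is the same as vanishing on all of
`[0, ∞)`, a condition that no longer depends on `T`.
-/

open MeasureTheory Set Matrix

theorem ContinuousOn.eqOn_zero_of_intervalIntegral_eq_zero {g : ℝ → ℝ} {a b : ℝ} (hab : a ≤ b)
    (hg : ContinuousOn g (Icc a b)) (hg0 : ∀ t ∈ Ioc a b, 0 ≤ g t)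
    (hint : ∫ t in a..b, g t = 0) : EqOn g 0 (Ioc a b) := by
  have hae : g =ᵐ[volume.restrict (Ioc a b)] 0 :=
    (intervalIntegral.integral_eq_zero_iff_of_le_of_nonneg_ae hab
      (ae_restrict_of_forall_mem measurableSet_Ioc hg0) (hg.intervalIntegrable_of_Icc hab)).1 hint
  exact Measure.eqOn_Ioc_of_ae_eq volume hae (hg.mono Ioc_subset_Icc_self) continuousOn_const

theorem AnalyticOnNhd.eqOn_zero_of_intervalIntegral_sq_eq_zero {f : ℝ → ℝ} {s : Set ℝ}
    {a b : ℝ} (hf : AnalyticOnNhd ℝ f s) (hs : IsPreconnected s) (hab : a < b)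
    (hsub : Icc a b ⊆ s) (hint : ∫ t in a..b, f t ^ 2 = 0) : EqOn f 0 s := by
  have hsq : EqOn (fun t => f t ^ 2) 0 (Ioc a b) :=
    ((hf.continuousOn.mono hsub).pow 2).eqOn_zero_of_intervalIntegral_eq_zero hab.le
      (fun _ _ => sq_nonneg _) hint
  have hmid : (a + b) / 2 ∈ Ioo a b := ⟨left_lt_add_div_two.2 hab, add_div_two_lt_right.2 hab⟩
  apply hf.eqOn_zero_of_preconnected_of_eventuallyEq_zero hs (hsub (Ioo_subset_Icc_self hmid))
  filter_upwards [Ioo_mem_nhds hmid.1 hmid.2] with t ht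
  exact pow_eq_zero_iff two_ne_zero |>.1 (hsq (Ioo_subset_Ioc_self ht))

section Gram

variable {ι : Type*} [Fintype ι]

noncomputable def gramMatrix (z : ℝ → ι → ℝ) (a b : ℝ) : Matrix ι ι ℝ :=
  Matrix.of fun i j => ∫ t in a..b, z t i * z t j

variable {z : ℝ → ι → ℝ} {a b : ℝ}

theorem gramMatrix_mulVec_apply (hz : ∀ i, ContinuousOn (fun t => z t i) (uIcc a b))
    (w : ι → ℝ) (i : ι) :
    (gramMatrix z a b *ᵥ w) i = ∫ t in a..b, z t i * (w ⬝ᵥ z t) := by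
  simp only [mulVec, dotProduct, gramMatrix, of_apply, ← intervalIntegral.integral_mul_const]
  rw [← intervalIntegral.integral_finsetSum (f := fun j t => z t i * z t j * w j) fun j _ =>
    ((hz i).mul (hz j)).intervalIntegrable.mul_const (w j)]
  congr 1 with t
  rw [Finset.mul_sum]
  exact Finset.sum_congr rfl fun j _ => by ring

theorem dotProduct_gramMatrix_mulVec (hz : ∀ i, ContinuousOn (fun t => z t i) (uIcc a b))
    (w : ι → ℝ) : w ⬝ᵥ (gramMatrix z a b *ᵥ w) = ∫ t in a..b, (w ⬝ᵥ z t) ^ 2 := by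
  have hwz : ContinuousOn (fun t => w ⬝ᵥ z t) (uIcc a b) :=
    continuousOn_finsetSum _ fun i _ => continuousOn_const.mul (hz i)
  rw [dotProduct]
  simp only [gramMatrix_mulVec_apply hz, ← intervalIntegral.integral_const_mul]
  rw [← intervalIntegral.integral_finsetSum (f := fun i t => w i * (z t i * (w ⬝ᵥ z t))) fun i _ =>
    (((hz i).mul hwz).intervalIntegrable.const_mul (w i))]
  congr 1 with t
  rw [sq, dotProduct, Finset.sum_mul]
  exact Finset.sum_congr rfl fun i _ => by ring

theorem analyticOnNhd_const_dotProduct {s : Set ℝ}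
    (hz : ∀ i, AnalyticOnNhd ℝ (fun t => z t i) s) (w : ι → ℝ) :
    AnalyticOnNhd ℝ (fun t => w ⬝ᵥ z t) s :=
  Finset.analyticOnNhd_fun_sum Finset.univ fun i _ => analyticOnNhd_const.mul (hz i)

theorem gramMatrix_mulVec_eq_zero_iff {s : Set ℝ} (hz : ∀ i, AnalyticOnNhd ℝ (fun t => z t i) s)
    (hs : IsPreconnected s) (hab : a < b) (hsub : Icc a b ⊆ s) (w : ι → ℝ) :
    gramMatrix z a b *ᵥ w = 0 ↔ ∀ t ∈ s, w ⬝ᵥ z t = 0 := by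
  have hsub' : uIcc a b ⊆ s := uIcc_of_le hab.le ▸ hsub
  have hzc : ∀ i, ContinuousOn (fun t => z t i) (uIcc a b) :=
    fun i => (hz i).continuousOn.mono hsub'
  constructor
  · intro h
    refine (analyticOnNhd_const_dotProduct hz w).eqOn_zero_of_intervalIntegral_sq_eq_zero hs hab
      hsub ?_
    rw [← dotProduct_gramMatrix_mulVec hzc, h, dotProduct_zero]
  · intro h
    ext i
    rw [gramMatrix_mulVec_apply hzc, Pi.zero_apply]
    refine (intervalIntegral.integral_congr fun t ht => ?_).trans intervalIntegral.integral_zero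
    simp only [h t (hsub' ht), mul_zero]

end Gram

theorem stmt_1_general {n : ℕ}
    (z : ℝ → Fin n → ℝ)
    (hzan : ∀ i, AnalyticOnNhd ℝ (fun t => z t i) (Set.Ici (0 : ℝ)))
    (T₀ T : ℝ) (hT₀ : 0 < T₀) (hTT : T₀ ≤ T)
    (v : Fin n → ℝ)
    (hint : ∫ t in (0 : ℝ)..T₀, (∑ i, v i * z t i) ^ 2 = 0) :
    (∀ t ≥ (0 : ℝ), ∑ i, v i * z t i = 0) ∧
    (∫ t in (0 : ℝ)..T, (∑ i, v i * z t i) ^ 2 = 0) ∧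
    (∀ T₁ T₂ : ℝ, 0 < T₁ → 0 < T₂ → ∀ w : Fin n → ℝ,
      (Matrix.of fun i j => ∫ t in (0 : ℝ)..T₁, z t i * z t j).mulVec w = 0 ↔
      (Matrix.of fun i j => ∫ t in (0 : ℝ)..T₂, z t i * z t j).mulVec w = 0) := by
  have hnull : ∀ T' : ℝ, 0 < T' → ∀ w : Fin n → ℝ,
      gramMatrix z 0 T' *ᵥ w = 0 ↔ ∀ t ∈ Ici (0 : ℝ), w ⬝ᵥ z t = 0 := fun T' hT' =>
    gramMatrix_mulVec_eq_zero_iff hzan isPreconnected_Ici hT' Icc_subset_Ici_self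
  have hT : 0 < T := hT₀.trans_le hTT
  have hv : ∀ t ≥ (0 : ℝ), v ⬝ᵥ z t = 0 := fun t ht =>
    (analyticOnNhd_const_dotProduct hzan v).eqOn_zero_of_intervalIntegral_sq_eq_zero
      isPreconnected_Ici hT₀ Icc_subset_Ici_self hint ht
  refine ⟨hv, ?_, fun T₁ T₂ hT₁ hT₂ w => (hnull T₁ hT₁ w).trans (hnull T₂ hT₂ w).symm⟩
  have hzc : ∀ i, ContinuousOn (fun t => z t i) (uIcc 0 T) := fun i =>
    (hzan i).continuousOn.mono (uIcc_of_le hT.le ▸ Icc_subset_Ici_self)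
  show ∫ t in (0 : ℝ)..T, (v ⬝ᵥ z t) ^ 2 = 0
  rw [← dotProduct_gramMatrix_mulVec hzc, (hnull T hT v).2 hv, dotProduct_zero]

/-- For the SIS trajectory `z` (which is analytic in `t`), if
`∫₀^{T₀} ⟨v, z(t)⟩² dt = 0` for some `T₀ > 0`, then `⟨v, z(t)⟩ = 0` for all `t ≥ 0`,
in particular `∫₀^{T} ⟨v, z(t)⟩² dt = 0` for any `T ≥ T₀`; consequently the nullspace
of the Gram matrix `G(T)` is the same for every `T > 0`. -/
theorem stmt_1 {n : ℕ} (W : Matrix (Fin n) (Fin n) ℝ) (pv γ : Fin n → ℝ)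
    (z : ℝ → Fin n → ℝ)
    (hWsymm : W.IsSymm) (hWpos : ∀ i j, 0 ≤ W i j)
    (hpv : ∀ i, 0 ≤ pv i) (hpv1 : ∑ i, pv i = 1) (hγ : ∀ i, 0 ≤ γ i)
    (hode : ∀ i, ∀ t ∈ Set.Ici (0 : ℝ), HasDerivWithinAt (fun s => z s i)
      ((1 - z t i) * (∑ j, W i j * pv j * z t j) - γ i * z t i) (Set.Ici 0) t)
    (hz01 : ∀ t ∈ Set.Ici (0 : ℝ), ∀ i, z t i ∈ Set.Icc (0 : ℝ) 1)
    (hzan : ∀ i, AnalyticOnNhd ℝ (fun t => z t i) (Set.Ici (0 : ℝ)))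
    (T₀ T : ℝ) (hT₀ : 0 < T₀) (hTT : T₀ ≤ T)
    (v : Fin n → ℝ)
    (hint : ∫ t in (0 : ℝ)..T₀, (∑ i, v i * z t i) ^ 2 = 0) :
    (∀ t ≥ (0 : ℝ), ∑ i, v i * z t i = 0) ∧
    (∫ t in (0 : ℝ)..T, (∑ i, v i * z t i) ^ 2 = 0) ∧
    (∀ T₁ T₂ : ℝ, 0 < T₁ → 0 < T₂ → ∀ w : Fin n → ℝ,
      (Matrix.of fun i j => ∫ t in (0 : ℝ)..T₁, z t i * z t j).mulVec w = 0 ↔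
      (Matrix.of fun i j => ∫ t in (0 : ℝ)..T₂, z t i * z t j).mulVec w = 0) :=
  stmt_1_general z hzan T₀ T hT₀ hTT v hint
end

section
/- Let z and ẑ be trajectories of the SIS model with parameters (W, z(0), γ, π) and (Ŵ, ẑ(0), γ̂, π) respectively, where W, Ŵ are symmetric with entries in [0,M], z(0), ẑ(0) ∈ [0,1]ⁿ, and γ, γ̂ have entries in [0,M]. Then for every T > 0: sup_{0 ≤ t ≤ T} ‖z(t) − ẑ(t)‖_{1,π} ≤ (‖z(0) − ẑ(0)‖_{1,π} + T·‖γ − γ̂‖_{1,π} + H_{1,T}) · e^{3MT}. -/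
/-!
Write `u = z - ẑ`, `φ = ‖u‖_{1,π}` (`weightedL1`), and `A x = W Π x` (`infectionPressure`).
Splitting the difference of the two SIS vector fields into five terms gives
`|u_i'| ≤ |(A z - Â z)_i| + (Â |u|)_i + 2 M |u_i| + |γ_i - γ̂_i|`. Averaging against `π`, and using
that the `π`-weighted column sums of `Â` are at most `M`, the right Dini derivative of `φ` is at
most `3 M φ + ‖γ - γ̂‖_{1,π} + ‖A z - Â z‖_{1,π}`, and Grönwall's inequality with this forcing
term gives the bound. Since `φ` is only Lipschitz, the argument works with right Dini
derivatives throughout.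
-/

open Set Filter MeasureTheory intervalIntegral
open scoped Topology

section Gronwall

lemma gronwallBound_mul_right (δ K E t : ℝ) :
    gronwallBound δ K (K * E) t = δ * Real.exp (K * t) + E * (Real.exp (K * t) - 1) := by
  rcases eq_or_ne K 0 with rfl | hK
  · simp [gronwallBound_K0]
  · rw [gronwallBound_of_K_ne_0 hK, mul_div_cancel_left₀ E hK]

lemma frequently_slope_sub_lt {f h : ℝ → ℝ} {x c d r : ℝ}
    (hf : ∀ r, c < r → ∃ᶠ y in 𝓝[>] x, (y - x)⁻¹ * (f y - f x) < r)
    (hh : Tendsto (slope h x) (𝓝[>] x) (𝓝 d)) (hr : c - d < r) :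
    ∃ᶠ y in 𝓝[>] x, (y - x)⁻¹ * ((f y - h y) - (f x - h x)) < r := by
  set δ := (r - (c - d)) / 2 with hδ_def
  have hδ : 0 < δ := by linarith
  have hh_gt : ∀ᶠ y in 𝓝[>] x, d - δ < slope h x y := hh.eventually_const_lt (by linarith)
  refine ((hf (c + δ) (by linarith)).and_eventually hh_gt).mono fun y ⟨hfy, hhy⟩ => ?_
  rw [slope_def_field] at hhy
  have : (y - x)⁻¹ * ((f y - h y) - (f x - h x))
      = (y - x)⁻¹ * (f y - f x) - (h y - h x) / (y - x) := by ring
  rw [this]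
  linarith

/-- The constant-forcing Grönwall bound applies to `f - ∫ s in a..·, e s`, since
`K * f ≤ K * (f - ∫ s in a..·, e s) + K * ∫ s in a..b, e s` when `e ≥ 0`. -/
theorem le_mul_exp_of_liminf_deriv_right_le_add {f f' e : ℝ → ℝ} {K a b : ℝ} (hK : 0 ≤ K)
    (hf : ContinuousOn f (Icc a b)) (he : ContinuousOn e (Icc a b))
    (he0 : ∀ x ∈ Icc a b, 0 ≤ e x)
    (hf' : ∀ x ∈ Ico a b, ∀ r, f' x < r → ∃ᶠ z in 𝓝[>] x, (z - x)⁻¹ * (f z - f x) < r)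
    (bound : ∀ x ∈ Ico a b, f' x ≤ K * f x + e x) :
    ∀ x ∈ Icc a b, f x ≤ (f a + ∫ s in a..b, e s) * Real.exp (K * (x - a)) := by
  intro x hx
  have hab : a ≤ b := hx.1.trans hx.2
  set h : ℝ → ℝ := fun u => ∫ s in a..u, e s
  set E := ∫ s in a..b, e s
  have h_le : ∀ u ∈ Icc a b, h u ≤ E := fun u hu =>
    integral_mono_interval le_rfl hu.1 hu.2
      ((ae_restrict_iff' measurableSet_Ioc).2 (Eventually.of_forall fun s hs =>
        he0 s (Ioc_subset_Icc_self hs)))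
      ((he.mono (uIcc_of_le hab).subset).intervalIntegrable)
  have h_cont : ContinuousOn h (Icc a b) := by
    have := continuousOn_primitive_interval (μ := volume) (a := a) (b := b) (f := e)
      (by simpa only [uIcc_of_le hab] using he.integrableOn_Icc (μ := volume))
    rwa [uIcc_of_le hab] at this
  have h_slope : ∀ u ∈ Ico a b, Tendsto (slope h u) (𝓝[>] u) (𝓝 (e u)) := by
    intro u hu
    have hIcc : Icc a b ∈ 𝓝[>] u :=
      mem_of_superset (Ioo_mem_nhdsGT hu.2) fun s hs => ⟨hu.1.trans hs.1.le, hs.2.le⟩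
    have hderiv : HasDerivWithinAt h (e u) (Ici u) u :=
      integral_hasDerivWithinAt_right (t := Ioi u)
        ((he.mono (uIcc_subset_Icc (left_mem_Icc.2 hab) ⟨hu.1, hu.2.le⟩)).intervalIntegrable)
        ((he.stronglyMeasurableAtFilter_nhdsWithin measurableSet_Icc u).filter_mono
          (nhdsWithin_le_of_mem hIcc))
        ((he.continuousWithinAt ⟨hu.1, hu.2.le⟩).mono_of_mem_nhdsWithin hIcc)
    exact (hasDerivWithinAt_iff_tendsto_slope' self_notMem_Ioi).1 hderiv.Ioi_of_Ici
  have hg := le_gronwallBound_of_liminf_deriv_right_le (f := fun u => f u - h u)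
    (f' := fun u => f' u - e u) (δ := f a) (K := K) (ε := K * E) (hf.sub h_cont)
    (fun u hu r hr => frequently_slope_sub_lt (hf' u hu) (h_slope u hu) hr)
    (by simp [h])
    (fun u hu => by
      have := mul_le_mul_of_nonneg_left (h_le u (Ico_subset_Icc_self hu)) hK
      linarith [bound u hu])
    x hx
  rw [gronwallBound_mul_right] at hg
  linarith [h_le x hx]

end Gronwall

section SIS

variable {ι : Type*} [Fintype ι]

def weightedL1 (π v : ι → ℝ) : ℝ := ∑ i, |v i| * π i

def infectionPressure (W : Matrix ι ι ℝ) (π x : ι → ℝ) (i : ι) : ℝ := ∑ j, W i j * π j * x j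

def sisField (W : Matrix ι ι ℝ) (π γ x : ι → ℝ) (i : ι) : ℝ :=
  (1 - x i) * infectionPressure W π x i - γ i * x i

variable {M : ℝ} {W : Matrix ι ι ℝ} {π : ι → ℝ}

lemma weightedL1_nonneg (hπ : ∀ i, 0 ≤ π i) (v : ι → ℝ) : 0 ≤ weightedL1 π v :=
  Finset.sum_nonneg fun i _ => mul_nonneg (abs_nonneg _) (hπ i)

lemma frequently_slope_weightedL1_lt (hπ : ∀ i, 0 ≤ π i)
    {u : ℝ → ι → ℝ} {d : ι → ℝ} {x : ℝ}
    (hu : ∀ i, HasDerivWithinAt (fun s => u s i) (d i) (Ici x) x) (r : ℝ)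
    (hr : weightedL1 π d < r) :
    ∃ᶠ y in 𝓝[>] x, (y - x)⁻¹ * (weightedL1 π (u y) - weightedL1 π (u x)) < r := by
  have hslope : ∀ i, Tendsto (slope (fun s => u s i) x) (𝓝[>] x) (𝓝 (d i)) := fun i =>
    (hasDerivWithinAt_iff_tendsto_slope' self_notMem_Ioi).1 (hu i).Ioi_of_Ici
  have hlim : Tendsto (fun y => weightedL1 π fun i => slope (fun s => u s i) x y) (𝓝[>] x)
      (𝓝 (weightedL1 π d)) :=
    tendsto_finsetSum _ fun i _ => (hslope i).abs.mul_const _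
  refine Eventually.frequently ?_
  filter_upwards [hlim.eventually_lt_const hr, self_mem_nhdsWithin] with y hy hxy
  refine lt_of_le_of_lt ?_ hy
  rw [weightedL1, weightedL1, ← Finset.sum_sub_distrib, Finset.mul_sum]
  refine Finset.sum_le_sum fun i _ => ?_
  dsimp only
  rw [slope_def_field, abs_div, abs_of_pos (sub_pos.2 hxy : 0 < y - x), ← sub_mul,
    div_eq_inv_mul, mul_assoc]
  exact mul_le_mul_of_nonneg_left
    (mul_le_mul_of_nonneg_right (abs_sub_abs_le_abs_sub _ _) (hπ i))
    (inv_nonneg.2 (sub_pos.2 hxy).le)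

lemma infectionPressure_mem_Icc (hW : ∀ i j, W i j ∈ Icc 0 M) (hπ : ∀ i, 0 ≤ π i)
    (hπ1 : ∑ i, π i = 1) {x : ι → ℝ} (hx : ∀ j, x j ∈ Icc (0 : ℝ) 1) (i : ι) :
    infectionPressure W π x i ∈ Icc 0 M := by
  refine ⟨Finset.sum_nonneg fun j _ => mul_nonneg (mul_nonneg (hW i j).1 (hπ j)) (hx j).1, ?_⟩
  calc infectionPressure W π x i ≤ ∑ j, M * π j := Finset.sum_le_sum fun j _ => by
        have := mul_le_mul_of_nonneg_right (hW i j).2 (hπ j)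
        have := mul_le_of_le_one_right (mul_nonneg (hW i j).1 (hπ j)) (hx j).2
        linarith
    _ = M := by rw [← Finset.mul_sum, hπ1, mul_one]

lemma abs_infectionPressure_sub_le (hW : ∀ i j, 0 ≤ W i j) (hπ : ∀ i, 0 ≤ π i)
    (x y : ι → ℝ) (i : ι) :
    |infectionPressure W π x i - infectionPressure W π y i|
      ≤ infectionPressure W π (fun j => |x j - y j|) i := by
  unfold infectionPressure
  rw [← Finset.sum_sub_distrib]
  refine (Finset.abs_sum_le_sum_abs _ _).trans (Finset.sum_le_sum fun j _ => ?_)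
  rw [← mul_sub, abs_mul, abs_of_nonneg (mul_nonneg (hW i j) (hπ j))]

lemma sum_infectionPressure_mul_le (hW : ∀ i j, W i j ≤ M) (hπ : ∀ i, 0 ≤ π i)
    (hπ1 : ∑ i, π i = 1) {v : ι → ℝ} (hv : ∀ j, 0 ≤ v j) :
    ∑ i, infectionPressure W π v i * π i ≤ M * ∑ j, v j * π j := by
  have hcol : ∀ j, ∑ i, W i j * π i ≤ M := fun j => by
    calc ∑ i, W i j * π i ≤ ∑ i, M * π i :=
          Finset.sum_le_sum fun i _ => mul_le_mul_of_nonneg_right (hW i j) (hπ i)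
      _ = M := by rw [← Finset.mul_sum, hπ1, mul_one]
  calc ∑ i, infectionPressure W π v i * π i = ∑ j, (∑ i, W i j * π i) * (v j * π j) := by
        simp only [infectionPressure, Finset.sum_mul]
        rw [Finset.sum_comm]
        exact Finset.sum_congr rfl fun j _ => Finset.sum_congr rfl fun i _ => by ring
    _ ≤ ∑ j, M * (v j * π j) :=
        Finset.sum_le_sum fun j _ => mul_le_mul_of_nonneg_right (hcol j)
          (mul_nonneg (hv j) (hπ j))
    _ = M * ∑ j, v j * π j := (Finset.mul_sum ..).symm

lemma abs_sisField_sub_le {W' : Matrix ι ι ℝ} {γ γ' x x' : ι → ℝ}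
    (hW' : ∀ i j, W' i j ∈ Icc 0 M) (hπ : ∀ i, 0 ≤ π i) (hπ1 : ∑ i, π i = 1)
    (hγ : ∀ i, γ i ∈ Icc 0 M) (hx : ∀ j, x j ∈ Icc (0 : ℝ) 1) (hx' : ∀ j, x' j ∈ Icc (0 : ℝ) 1)
    (i : ι) :
    |sisField W π γ x i - sisField W' π γ' x' i|
      ≤ |infectionPressure W π x i - infectionPressure W' π x i|
        + infectionPressure W' π (fun j => |x j - x' j|) i
        + 2 * M * |x i - x' i| + |γ i - γ' i| := by
  set P := infectionPressure W π x i
  set Q := infectionPressure W' π x i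
  set Q' := infectionPressure W' π x' i
  have hdecomp : sisField W π γ x i - sisField W' π γ' x' i
      = (1 - x i) * (P - Q) + (1 - x i) * (Q - Q') + (x' i - x i) * Q'
        - γ i * (x i - x' i) - (γ i - γ' i) * x' i := by
    simp only [sisField, P, Q, Q']; ring
  have h1x : |1 - x i| ≤ 1 := abs_le.2 ⟨by linarith [(hx i).2], by linarith [(hx i).1]⟩
  have hQ' := infectionPressure_mem_Icc hW' hπ hπ1 hx' i
  have b₁ : |(1 - x i) * (P - Q)| ≤ |P - Q| := by
    rw [abs_mul]; exact mul_le_of_le_one_left (abs_nonneg _) h1x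
  have b₂ : |(1 - x i) * (Q - Q')| ≤ infectionPressure W' π (fun j => |x j - x' j|) i := by
    rw [abs_mul]
    exact (mul_le_of_le_one_left (abs_nonneg _) h1x).trans
      (abs_infectionPressure_sub_le (fun i j => (hW' i j).1) hπ x x' i)
  have b₃ : |(x' i - x i) * Q'| ≤ M * |x i - x' i| := by
    rw [abs_mul, abs_sub_comm, abs_of_nonneg hQ'.1, mul_comm]
    exact mul_le_mul_of_nonneg_right hQ'.2 (abs_nonneg _)
  have b₄ : |γ i * (x i - x' i)| ≤ M * |x i - x' i| := by
    rw [abs_mul, abs_of_nonneg (hγ i).1]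
    exact mul_le_mul_of_nonneg_right (hγ i).2 (abs_nonneg _)
  have b₅ : |(γ i - γ' i) * x' i| ≤ |γ i - γ' i| := by
    rw [abs_mul, abs_of_nonneg (hx' i).1]
    exact mul_le_of_le_one_right (abs_nonneg _) (hx' i).2
  rw [hdecomp, abs_le]
  obtain ⟨l₁, u₁⟩ := abs_le.1 b₁
  obtain ⟨l₂, u₂⟩ := abs_le.1 b₂
  obtain ⟨l₃, u₃⟩ := abs_le.1 b₃
  obtain ⟨l₄, u₄⟩ := abs_le.1 b₄
  obtain ⟨l₅, u₅⟩ := abs_le.1 b₅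
  constructor <;> linarith

lemma weightedL1_sisField_sub_le {W' : Matrix ι ι ℝ} {γ γ' x x' : ι → ℝ}
    (hW' : ∀ i j, W' i j ∈ Icc 0 M) (hπ : ∀ i, 0 ≤ π i) (hπ1 : ∑ i, π i = 1)
    (hγ : ∀ i, γ i ∈ Icc 0 M) (hx : ∀ j, x j ∈ Icc (0 : ℝ) 1) (hx' : ∀ j, x' j ∈ Icc (0 : ℝ) 1) :
    weightedL1 π (sisField W π γ x - sisField W' π γ' x')
      ≤ 3 * M * weightedL1 π (x - x')
        + (weightedL1 π (γ - γ')
          + weightedL1 π (infectionPressure W π x - infectionPressure W' π x)) := by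
  have hcross := sum_infectionPressure_mul_le (fun i j => (hW' i j).2) hπ hπ1
    (v := fun j => |x j - x' j|) fun j => abs_nonneg _
  calc weightedL1 π (sisField W π γ x - sisField W' π γ' x')
      ≤ ∑ i, (|infectionPressure W π x i - infectionPressure W' π x i|
          + infectionPressure W' π (fun j => |x j - x' j|) i
          + 2 * M * |x i - x' i| + |γ i - γ' i|) * π i :=
        Finset.sum_le_sum fun i _ => mul_le_mul_of_nonneg_right
          (abs_sisField_sub_le hW' hπ hπ1 hγ hx hx' i) (hπ i)
    _ = weightedL1 π (infectionPressure W π x - infectionPressure W' π x)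
          + ∑ i, infectionPressure W' π (fun j => |x j - x' j|) i * π i
          + 2 * M * weightedL1 π (x - x') + weightedL1 π (γ - γ') := by
        simp only [weightedL1, add_mul, Finset.sum_add_distrib, Finset.mul_sum, mul_assoc,
          Pi.sub_apply]
    _ ≤ _ := by simp only [weightedL1, Pi.sub_apply] at hcross ⊢; linarith

theorem weightedL1_sub_le_of_sis {M T : ℝ} (hM : 0 ≤ M) {W W' : Matrix ι ι ℝ}
    {π γ γ' : ι → ℝ} {z z' : ℝ → ι → ℝ}
    (hW' : ∀ i j, W' i j ∈ Icc 0 M) (hπ : ∀ i, 0 ≤ π i) (hπ1 : ∑ i, π i = 1)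
    (hγ : ∀ i, γ i ∈ Icc 0 M)
    (hz : ∀ i, ∀ t ∈ Ici (0 : ℝ), HasDerivWithinAt (fun s => z s i) (sisField W π γ (z t) i)
      (Ici 0) t)
    (hz' : ∀ i, ∀ t ∈ Ici (0 : ℝ), HasDerivWithinAt (fun s => z' s i) (sisField W' π γ' (z' t) i)
      (Ici 0) t)
    (hz01 : ∀ t ∈ Ici (0 : ℝ), ∀ i, z t i ∈ Icc (0 : ℝ) 1)
    (hz01' : ∀ t ∈ Ici (0 : ℝ), ∀ i, z' t i ∈ Icc (0 : ℝ) 1) :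
    ∀ t ∈ Icc 0 T, weightedL1 π (z t - z' t)
      ≤ (weightedL1 π (z 0 - z' 0) + T * weightedL1 π (γ - γ') + ∫ s in (0 : ℝ)..T,
          weightedL1 π (infectionPressure W π (z s) - infectionPressure W' π (z s)))
        * Real.exp (3 * M * T) := by
  intro t ht
  have hT : 0 ≤ T := ht.1.trans ht.2
  set ε : ℝ → ℝ := fun s =>
    weightedL1 π (infectionPressure W π (z s) - infectionPressure W' π (z s))
  have hzc : ∀ i, ContinuousOn (fun s => z s i) (Icc 0 T) := fun i s hs =>
    (hz i s hs.1).continuousWithinAt.mono Icc_subset_Ici_self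
  have hzc' : ∀ i, ContinuousOn (fun s => z' s i) (Icc 0 T) := fun i s hs =>
    (hz' i s hs.1).continuousWithinAt.mono Icc_subset_Ici_self
  have hεc : ContinuousOn ε (Icc 0 T) := by
    simp only [ε, weightedL1, infectionPressure, Pi.sub_apply]; fun_prop
  have hgronwall := le_mul_exp_of_liminf_deriv_right_le_add (by positivity : 0 ≤ 3 * M)
    (f := fun s => weightedL1 π (z s - z' s)) (e := fun s => weightedL1 π (γ - γ') + ε s)
    (by simp only [weightedL1, Pi.sub_apply]; fun_prop) (continuousOn_const.add hεc)
    (fun s _ => add_nonneg (weightedL1_nonneg hπ _) (weightedL1_nonneg hπ _))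
    (fun s hs => frequently_slope_weightedL1_lt hπ
      (d := sisField W π γ (z s) - sisField W' π γ' (z' s))
      fun i => ((hz i s hs.1).sub (hz' i s hs.1)).mono (Ici_subset_Ici.2 hs.1))
    (fun s hs => weightedL1_sisField_sub_le hW' hπ hπ1 hγ (hz01 s hs.1) (hz01' s hs.1))
    t ht
  rw [integral_add intervalIntegrable_const (hεc.mono (uIcc_of_le hT).subset).intervalIntegrable,
    intervalIntegral.integral_const, smul_eq_mul, sub_zero, sub_zero, ← add_assoc] at hgronwall
  have hε_nonneg : 0 ≤ ∫ s in (0 : ℝ)..T, ε s :=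
    integral_nonneg hT fun s _ => weightedL1_nonneg hπ _
  exact hgronwall.trans <| mul_le_mul_of_nonneg_left (Real.exp_le_exp.2 (by nlinarith [ht.2]))
    (add_nonneg (add_nonneg (weightedL1_nonneg hπ _) (mul_nonneg hT (weightedL1_nonneg hπ _)))
      hε_nonneg)

end SIS

theorem stmt_2_general {n : ℕ} (M : ℝ) (hM : 0 ≤ M)
    (W W' : Matrix (Fin n) (Fin n) ℝ) (pv γ γ' : Fin n → ℝ)
    (z z' : ℝ → Fin n → ℝ)
    (hW'b : ∀ i j, W' i j ∈ Set.Icc (0 : ℝ) M)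
    (hpv : ∀ i, 0 ≤ pv i) (hpv1 : ∑ i, pv i = 1)
    (hγ : ∀ i, γ i ∈ Set.Icc (0 : ℝ) M)
    (hode : ∀ i, ∀ t ∈ Set.Ici (0 : ℝ), HasDerivWithinAt (fun s => z s i)
      ((1 - z t i) * (∑ j, W i j * pv j * z t j) - γ i * z t i) (Set.Ici 0) t)
    (hode' : ∀ i, ∀ t ∈ Set.Ici (0 : ℝ), HasDerivWithinAt (fun s => z' s i)
      ((1 - z' t i) * (∑ j, W' i j * pv j * z' t j) - γ' i * z' t i) (Set.Ici 0) t)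
    (hz01 : ∀ t ∈ Set.Ici (0 : ℝ), ∀ i, z t i ∈ Set.Icc (0 : ℝ) 1)
    (hz01' : ∀ t ∈ Set.Ici (0 : ℝ), ∀ i, z' t i ∈ Set.Icc (0 : ℝ) 1)
    (T : ℝ) :
    ∀ t ∈ Set.Icc (0 : ℝ) T,
      ∑ i, |z t i - z' t i| * pv i ≤
        (∑ i, |z 0 i - z' 0 i| * pv i + T * ∑ i, |γ i - γ' i| * pv i +
          ∫ s in (0 : ℝ)..T,
            ∑ i, |(∑ j, W i j * pv j * z s j) - (∑ j, W' i j * pv j * z s j)| * pv i) *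
        Real.exp (3 * M * T) :=
  weightedL1_sub_le_of_sis hM hW'b hpv hpv1 hγ hode hode' hz01 hz01'

/-- Stability lemma (Lemma `l:H1`): for two SIS trajectories `z, ẑ` with parameters
`(W, z(0), γ, π)` and `(Ŵ, ẑ(0), γ̂, π)` (weights and curing rates bounded by `M`),
`sup_{0 ≤ t ≤ T} ‖z(t) − ẑ(t)‖_{1,π}
  ≤ (‖z(0) − ẑ(0)‖_{1,π} + T‖γ − γ̂‖_{1,π} + H_{1,T}) e^{3MT}`. -/
theorem stmt_2 {n : ℕ} (M : ℝ) (hM : 0 ≤ M)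
    (W W' : Matrix (Fin n) (Fin n) ℝ) (pv γ γ' : Fin n → ℝ)
    (z z' : ℝ → Fin n → ℝ)
    (hWsymm : W.IsSymm) (hW'symm : W'.IsSymm)
    (hWb : ∀ i j, W i j ∈ Set.Icc (0 : ℝ) M) (hW'b : ∀ i j, W' i j ∈ Set.Icc (0 : ℝ) M)
    (hpv : ∀ i, 0 ≤ pv i) (hpv1 : ∑ i, pv i = 1)
    (hγ : ∀ i, γ i ∈ Set.Icc (0 : ℝ) M) (hγ' : ∀ i, γ' i ∈ Set.Icc (0 : ℝ) M)
    (hode : ∀ i, ∀ t ∈ Set.Ici (0 : ℝ), HasDerivWithinAt (fun s => z s i)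
      ((1 - z t i) * (∑ j, W i j * pv j * z t j) - γ i * z t i) (Set.Ici 0) t)
    (hode' : ∀ i, ∀ t ∈ Set.Ici (0 : ℝ), HasDerivWithinAt (fun s => z' s i)
      ((1 - z' t i) * (∑ j, W' i j * pv j * z' t j) - γ' i * z' t i) (Set.Ici 0) t)
    (hz01 : ∀ t ∈ Set.Ici (0 : ℝ), ∀ i, z t i ∈ Set.Icc (0 : ℝ) 1)
    (hz01' : ∀ t ∈ Set.Ici (0 : ℝ), ∀ i, z' t i ∈ Set.Icc (0 : ℝ) 1)
    (T : ℝ) (hT : 0 < T) :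
    ∀ t ∈ Set.Icc (0 : ℝ) T,
      ∑ i, |z t i - z' t i| * pv i ≤
        (∑ i, |z 0 i - z' 0 i| * pv i + T * ∑ i, |γ i - γ' i| * pv i +
          ∫ s in (0 : ℝ)..T,
            ∑ i, |(∑ j, W i j * pv j * z s j) - (∑ j, W' i j * pv j * z s j)| * pv i) *
        Real.exp (3 * M * T) :=
  stmt_2_general M hM W W' pv γ γ' z z' hW'b hpv hpv1 hγ hode hode' hz01 hz01' T
end

section
/- Let z and ẑ be trajectories of the SIS model with parameters (W, z(0), γ, π) and (Ŵ, z(0), γ, π) respectively (same initial condition and same curing rates), where W, Ŵ are symmetric with entries in [0,M], z(0) ∈ [0,1]ⁿ, and γ has entries in [0,M]. Then for every T > 0: sup_{0 ≤ t ≤ T} ‖z(t) − ẑ(t)‖_{1,π} ≤ e^{3MT}·H_{1,T} ≤ √T·e^{3MT}·H_{2,T}. -/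
/-!
With `A = WΠ`, `Â = W'Π`, write `e(t) = ‖z(t) − z'(t)‖_{1,π}` and `h(t) = ‖(A − Â) z(t)‖_{1,π}`.
The drift difference splits as
`(1 − zᵢ)((A − Â)z)ᵢ + (1 − zᵢ)(Â(z − z'))ᵢ − (zᵢ − z'ᵢ)(Âz')ᵢ − γᵢ(zᵢ − z'ᵢ)`.
Since `z, z' ∈ [0,1]ⁿ`, `0 ≤ Âz' ≤ M`, and the column sums `∑ᵢ W'ᵢⱼ πᵢ` are at most `M`, the last
three terms contribute at most `3M e` in `‖·‖_{1,π}`, so `e(t) ≤ ∫₀ᵗ (h + 3M e)` and Grönwall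
gives the first bound. The second is Cauchy–Schwarz, first in `π`, then in time.
-/

open Set MeasureTheory intervalIntegral

theorem le_mul_exp_of_le_add_mul_integral {e : ℝ → ℝ} {a b c K : ℝ} (hK : 0 ≤ K)
    (he : ContinuousOn e (Icc a b)) (hle : ∀ t ∈ Icc a b, e t ≤ c + K * ∫ s in a..t, e s) :
    ∀ t ∈ Icc a b, e t ≤ c * Real.exp (K * (t - a)) := by
  intro t ht
  have hab : a ≤ b := ht.1.trans ht.2
  set G : ℝ → ℝ := fun t => c + K * ∫ s in a..t, e s
  have hG : ContinuousOn G (Icc a b) := by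
    have := continuousOn_primitive_interval' (μ := volume) (he.intervalIntegrable_of_Icc hab)
      left_mem_uIcc
    rw [uIcc_of_le hab] at this
    exact continuousOn_const.add (continuousOn_const.mul this)
  have hG' : ∀ x ∈ Ico a b, HasDerivWithinAt G (K * e x) (Ici x) x := by
    intro x hx
    have : Fact (x ∈ Icc a b) := ⟨Ico_subset_Icc_self hx⟩
    have hprim : HasDerivWithinAt (fun u => ∫ s in a..u, e s) (e x) (Icc a b) x :=
      integral_hasDerivWithinAt_right
        ((he.mono (Icc_subset_Icc_right hx.2.le)).intervalIntegrable_of_Icc hx.1)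
        (he.stronglyMeasurableAtFilter_nhdsWithin measurableSet_Icc x) (he x this.out)
    exact ((hprim.const_mul K).const_add c).mono_of_mem_nhdsWithin
      (Icc_mem_nhdsGE_of_mem ⟨hx.1, hx.2⟩)
  have hGle := le_gronwallBound_of_liminf_deriv_right_le (δ := c) (ε := 0) hG
    (fun x hx _ hr => (hG' x hx).liminf_right_slope_le hr) (by simp [G])
    (fun x hx => by
      rw [add_zero]
      exact mul_le_mul_of_nonneg_left (hle x (Ico_subset_Icc_self hx)) hK) t ht
  rw [gronwallBound_ε0] at hGle
  exact (hle t ht).trans hGle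

theorem le_exp_mul_integral_of_le_integral_add_mul {e h : ℝ → ℝ} {a b K : ℝ} (hK : 0 ≤ K)
    (he : ContinuousOn e (Icc a b)) (hh : ContinuousOn h (Icc a b))
    (hh0 : ∀ t ∈ Icc a b, 0 ≤ h t) (hle : ∀ t ∈ Icc a b, e t ≤ ∫ s in a..t, (h s + K * e s)) :
    ∀ t ∈ Icc a b, e t ≤ Real.exp (K * (b - a)) * ∫ s in a..b, h s := by
  have hle' : ∀ t ∈ Icc a b, e t ≤ (∫ s in a..b, h s) + K * ∫ s in a..t, e s := by
    intro t ht
    have hab : a ≤ b := ht.1.trans ht.2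
    have hsub : Icc a t ⊆ Icc a b := Icc_subset_Icc_right ht.2
    have hint_t : ∫ s in a..t, h s ≤ ∫ s in a..b, h s :=
      integral_mono_interval le_rfl ht.1 ht.2
        ((ae_restrict_iff' measurableSet_Ioc).2 <| .of_forall fun s hs =>
          hh0 s (Ioc_subset_Icc_self hs))
        (hh.intervalIntegrable_of_Icc hab)
    calc e t ≤ ∫ s in a..t, (h s + K * e s) := hle t ht
      _ = (∫ s in a..t, h s) + K * ∫ s in a..t, e s := by
        rw [integral_add ((hh.mono hsub).intervalIntegrable_of_Icc ht.1)
          (((he.mono hsub).intervalIntegrable_of_Icc ht.1).const_mul K),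
          intervalIntegral.integral_const_mul]
      _ ≤ (∫ s in a..b, h s) + K * ∫ s in a..t, e s := by gcongr
  intro t ht
  have hH : 0 ≤ ∫ s in a..b, h s := integral_nonneg (ht.1.trans ht.2) hh0
  calc e t ≤ (∫ s in a..b, h s) * Real.exp (K * (t - a)) :=
        le_mul_exp_of_le_add_mul_integral hK he hle' t ht
    _ ≤ Real.exp (K * (b - a)) * ∫ s in a..b, h s := by
        rw [mul_comm]
        gcongr
        exact ht.2

theorem sq_integral_le_mul_integral_sq {f : ℝ → ℝ} {a b : ℝ} (hab : a ≤ b)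
    (hf : IntervalIntegrable f volume a b)
    (hf2 : IntervalIntegrable (fun x => f x ^ 2) volume a b) :
    (∫ x in a..b, f x) ^ 2 ≤ (b - a) * ∫ x in a..b, f x ^ 2 := by
  have hquad : ∀ r : ℝ,
      0 ≤ (b - a) * (r * r) + (-2 * ∫ x in a..b, f x) * r + ∫ x in a..b, f x ^ 2 := by
    intro r
    have hsq : ∫ x in a..b, (f x - r) ^ 2 =
        (b - a) * (r * r) + (-2 * ∫ x in a..b, f x) * r + ∫ x in a..b, f x ^ 2 := by
      have : ∀ x, (f x - r) ^ 2 = f x ^ 2 - (2 * r) * f x + r ^ 2 := fun x => by ring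
      simp_rw [this]
      rw [integral_add (hf2.sub (hf.const_mul _)) intervalIntegrable_const,
        integral_sub hf2 (hf.const_mul _), intervalIntegral.integral_const_mul,
        intervalIntegral.integral_const, smul_eq_mul]
      ring
    rw [← hsq]
    exact integral_nonneg hab fun x _ => sq_nonneg _
  have := discrim_le_zero hquad
  rw [discrim] at this
  nlinarith

theorem sq_sum_abs_mul_le_sum_sq_mul {ι : Type*} (s : Finset ι) {x w : ι → ℝ}
    (hw : ∀ i ∈ s, 0 ≤ w i) (hw1 : ∑ i ∈ s, w i = 1) :
    (∑ i ∈ s, |x i| * w i) ^ 2 ≤ ∑ i ∈ s, x i ^ 2 * w i := by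
  have := Finset.sum_sq_le_sum_mul_sum_of_sq_le_mul s hw
    (fun i hi => mul_nonneg (sq_nonneg (x i)) (hw i hi)) (r := fun i => |x i| * w i)
    fun i _ => le_of_eq (by rw [mul_pow, sq_abs]; ring)
  rwa [hw1, one_mul] at this

theorem integral_le_sqrt_mul_sqrt_integral {f g : ℝ → ℝ} {a b : ℝ} (hab : a ≤ b)
    (hf : ContinuousOn f (Icc a b)) (hg : ContinuousOn g (Icc a b))
    (hfg : ∀ x ∈ Icc a b, f x ^ 2 ≤ g x) :
    ∫ x in a..b, f x ≤ √(b - a) * √(∫ x in a..b, g x) := by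
  rw [← Real.sqrt_mul (sub_nonneg.2 hab)]
  refine (le_abs_self _).trans (Real.abs_le_sqrt ?_)
  calc (∫ x in a..b, f x) ^ 2 ≤ (b - a) * ∫ x in a..b, f x ^ 2 :=
        sq_integral_le_mul_integral_sq hab (hf.intervalIntegrable_of_Icc hab)
          ((hf.pow 2).intervalIntegrable_of_Icc hab)
    _ ≤ (b - a) * ∫ x in a..b, g x := by
        gcongr
        exact integral_mono_on hab ((hf.pow 2).intervalIntegrable_of_Icc hab)
          (hg.intervalIntegrable_of_Icc hab) hfg

theorem abs_sub_le_integral_abs_deriv {u u' : ℝ → ℝ} {a b : ℝ} (hab : a ≤ b)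
    (hu : ContinuousOn u (Icc a b)) (hu' : ∀ x ∈ Ioo a b, HasDerivWithinAt u (u' x) (Ioi x) x)
    (hint : IntervalIntegrable u' volume a b) : |u b - u a| ≤ ∫ x in a..b, |u' x| := by
  rw [← integral_eq_sub_of_hasDeriv_right_of_le hab hu hu' hint]
  exact abs_integral_le_integral_abs hab

section

variable {ι : Type*} [Fintype ι]

theorem sum_abs_sub_mul_le_integral {x y f g : ℝ → ι → ℝ} {π : ι → ℝ} {a t : ℝ}
    (hπ : ∀ i, 0 ≤ π i) (hat : a ≤ t) (hxy : x a = y a)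
    (hx : ∀ i, ∀ s ∈ Ici a, HasDerivWithinAt (fun s => x s i) (f s i) (Ici a) s)
    (hy : ∀ i, ∀ s ∈ Ici a, HasDerivWithinAt (fun s => y s i) (g s i) (Ici a) s)
    (hf : ∀ i, ContinuousOn (fun s => f s i) (Icc a t))
    (hg : ∀ i, ContinuousOn (fun s => g s i) (Icc a t)) :
    ∑ i, |x t i - y t i| * π i ≤ ∫ s in a..t, ∑ i, |f s i - g s i| * π i := by
  have hsub : Icc a t ⊆ Ici a := Icc_subset_Ici_self
  have hint : ∀ i, IntervalIntegrable (fun s => f s i - g s i) volume a t := fun i =>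
    ((hf i).sub (hg i)).intervalIntegrable_of_Icc hat
  have hcomp : ∀ i, |x t i - y t i| ≤ ∫ s in a..t, |f s i - g s i| := by
    intro i
    have hcont : ContinuousOn (fun s => x s i - y s i) (Icc a t) := fun s hs =>
      ((hx i s (hsub hs)).continuousWithinAt.sub (hy i s (hsub hs)).continuousWithinAt).mono hsub
    have hderiv : ∀ s ∈ Ioo a t,
        HasDerivWithinAt (fun s => x s i - y s i) (f s i - g s i) (Ioi s) s := fun s hs =>
      ((hx i s hs.1.le).sub (hy i s hs.1.le)).mono fun r hr => (hs.1.trans hr).le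
    simpa [hxy] using abs_sub_le_integral_abs_deriv hat hcont hderiv (hint i)
  calc ∑ i, |x t i - y t i| * π i ≤ ∑ i, (∫ s in a..t, |f s i - g s i|) * π i :=
        Finset.sum_le_sum fun i _ => mul_le_mul_of_nonneg_right (hcomp i) (hπ i)
    _ = ∫ s in a..t, ∑ i, |f s i - g s i| * π i := by
        rw [integral_finsetSum fun i _ => (hint i).abs.mul_const (π i)]
        simp only [intervalIntegral.integral_mul_const]

-- `weightedMulVec W π x` is `(W Π) x` with `Π = diag π`, the paper's `A x`.
def weightedMulVec (W : Matrix ι ι ℝ) (π x : ι → ℝ) (i : ι) : ℝ := ∑ j, W i j * π j * x j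

def sisDrift (W : Matrix ι ι ℝ) (π γ x : ι → ℝ) (i : ι) : ℝ :=
  (1 - x i) * weightedMulVec W π x i - γ i * x i

theorem continuous_sisDrift (W : Matrix ι ι ℝ) (π γ : ι → ℝ) (i : ι) :
    Continuous fun x => sisDrift W π γ x i := by
  unfold sisDrift weightedMulVec
  fun_prop

section

variable {W : Matrix ι ι ℝ} {π : ι → ℝ} {M : ℝ}

theorem weightedMulVec_mem_Icc (hW : ∀ i j, W i j ∈ Icc 0 M) (hπ : ∀ j, 0 ≤ π j)
    (hπ1 : ∑ j, π j = 1) {x : ι → ℝ} (hx : ∀ j, x j ∈ Icc 0 1) (i : ι) :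
    weightedMulVec W π x i ∈ Icc 0 M := by
  constructor
  · exact Finset.sum_nonneg fun j _ => mul_nonneg (mul_nonneg (hW i j).1 (hπ j)) (hx j).1
  · calc weightedMulVec W π x i ≤ ∑ j, M * π j := by
          refine Finset.sum_le_sum fun j _ => ?_
          calc W i j * π j * x j ≤ W i j * π j :=
                mul_le_of_le_one_right (mul_nonneg (hW i j).1 (hπ j)) (hx j).2
            _ ≤ M * π j := mul_le_mul_of_nonneg_right (hW i j).2 (hπ j)
      _ = M := by rw [← Finset.mul_sum, hπ1, mul_one]

theorem abs_weightedMulVec_sub_le (hW : ∀ i j, 0 ≤ W i j) (hπ : ∀ j, 0 ≤ π j) (x y : ι → ℝ)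
    (i : ι) :
    |weightedMulVec W π x i - weightedMulVec W π y i| ≤
      weightedMulVec W π (fun j => |x j - y j|) i := by
  unfold weightedMulVec
  rw [← Finset.sum_sub_distrib]
  refine (Finset.abs_sum_le_sum_abs _ _).trans (Finset.sum_le_sum fun j _ => ?_)
  rw [← mul_sub, abs_mul, abs_of_nonneg (mul_nonneg (hW i j) (hπ j))]

theorem sum_weightedMulVec_mul_le (hW : ∀ i j, W i j ≤ M) (hπ : ∀ j, 0 ≤ π j)
    (hπ1 : ∑ j, π j = 1) {v : ι → ℝ} (hv : ∀ j, 0 ≤ v j) :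
    ∑ i, weightedMulVec W π v i * π i ≤ M * ∑ j, v j * π j := by
  have hcol : ∀ j, ∑ i, W i j * π i ≤ M := fun j => by
    calc ∑ i, W i j * π i ≤ ∑ i, M * π i :=
          Finset.sum_le_sum fun i _ => mul_le_mul_of_nonneg_right (hW i j) (hπ i)
      _ = M := by rw [← Finset.mul_sum, hπ1, mul_one]
  calc ∑ i, weightedMulVec W π v i * π i = ∑ j, (∑ i, W i j * π i) * (v j * π j) := by
        simp only [weightedMulVec, Finset.sum_mul]
        rw [Finset.sum_comm]
        refine Finset.sum_congr rfl fun j _ => Finset.sum_congr rfl fun i _ => by ring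
    _ ≤ ∑ j, M * (v j * π j) := Finset.sum_le_sum fun j _ =>
        mul_le_mul_of_nonneg_right (hcol j) (mul_nonneg (hv j) (hπ j))
    _ = M * ∑ j, v j * π j := (Finset.mul_sum _ _ _).symm

end

section

variable {W W' : Matrix ι ι ℝ} {π γ x y : ι → ℝ} {M : ℝ}

theorem abs_sisDrift_sub_le (hW' : ∀ i j, W' i j ∈ Icc 0 M) (hπ : ∀ j, 0 ≤ π j)
    (hπ1 : ∑ j, π j = 1) (hγ : ∀ i, γ i ∈ Icc 0 M) (hx : ∀ j, x j ∈ Icc 0 1)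
    (hy : ∀ j, y j ∈ Icc 0 1) (i : ι) :
    |sisDrift W π γ x i - sisDrift W' π γ y i| ≤
      |weightedMulVec W π x i - weightedMulVec W' π x i| +
        weightedMulVec W' π (fun j => |x j - y j|) i + 2 * M * |x i - y i| := by
  set a := weightedMulVec W π x i - weightedMulVec W' π x i
  set b := weightedMulVec W' π x i - weightedMulVec W' π y i
  set p := weightedMulVec W' π y i
  set d := x i - y i
  have hdrift : sisDrift W π γ x i - sisDrift W' π γ y i =
      (1 - x i) * a + (1 - x i) * b - d * p - γ i * d := by
    simp only [sisDrift, a, b, p, d]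
    ring
  have hx1 : |1 - x i| ≤ 1 := abs_le.2 ⟨by linarith [(hx i).2], by linarith [(hx i).1]⟩
  have hp := weightedMulVec_mem_Icc hW' hπ hπ1 hy i
  have ha : |(1 - x i) * a| ≤ |a| := by
    rw [abs_mul]; exact mul_le_of_le_one_left (abs_nonneg a) hx1
  have hb : |(1 - x i) * b| ≤ weightedMulVec W' π (fun j => |x j - y j|) i := by
    rw [abs_mul]
    exact (mul_le_of_le_one_left (abs_nonneg b) hx1).trans
      (abs_weightedMulVec_sub_le (fun i j => (hW' i j).1) hπ x y i)
  have hdp : |d * p| ≤ M * |d| := by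
    rw [abs_mul, abs_of_nonneg hp.1, mul_comm]
    exact mul_le_mul_of_nonneg_right hp.2 (abs_nonneg d)
  have hγd : |γ i * d| ≤ M * |d| := by
    rw [abs_mul, abs_of_nonneg (hγ i).1]
    exact mul_le_mul_of_nonneg_right (hγ i).2 (abs_nonneg d)
  rw [hdrift]
  linarith [abs_add_le ((1 - x i) * a) ((1 - x i) * b),
    abs_sub ((1 - x i) * a + (1 - x i) * b) (d * p),
    abs_sub ((1 - x i) * a + (1 - x i) * b - d * p) (γ i * d)]

theorem sum_abs_sisDrift_sub_mul_le (hW' : ∀ i j, W' i j ∈ Icc 0 M) (hπ : ∀ j, 0 ≤ π j)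
    (hπ1 : ∑ j, π j = 1) (hγ : ∀ i, γ i ∈ Icc 0 M) (hx : ∀ j, x j ∈ Icc 0 1)
    (hy : ∀ j, y j ∈ Icc 0 1) :
    ∑ i, |sisDrift W π γ x i - sisDrift W' π γ y i| * π i ≤
      ∑ i, |weightedMulVec W π x i - weightedMulVec W' π x i| * π i +
        3 * M * ∑ i, |x i - y i| * π i := by
  have hmid := sum_weightedMulVec_mul_le (fun i j => (hW' i j).2) hπ hπ1
    (v := fun j => |x j - y j|) fun j => abs_nonneg _
  calc ∑ i, |sisDrift W π γ x i - sisDrift W' π γ y i| * π i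
      ≤ ∑ i, (|weightedMulVec W π x i - weightedMulVec W' π x i| +
          weightedMulVec W' π (fun j => |x j - y j|) i + 2 * M * |x i - y i|) * π i :=
        Finset.sum_le_sum fun i _ => mul_le_mul_of_nonneg_right
          (abs_sisDrift_sub_le hW' hπ hπ1 hγ hx hy i) (hπ i)
    _ = ∑ i, |weightedMulVec W π x i - weightedMulVec W' π x i| * π i +
          ∑ i, weightedMulVec W' π (fun j => |x j - y j|) i * π i +
          2 * M * ∑ i, |x i - y i| * π i := by
        simp only [add_mul, Finset.sum_add_distrib, Finset.mul_sum, mul_assoc]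
    _ ≤ _ := by linarith

end

theorem sum_abs_sub_mul_le_integral_of_sis {W W' : Matrix ι ι ℝ} {π γ : ι → ℝ} {M : ℝ}
    {z z' : ℝ → ι → ℝ} (hW' : ∀ i j, W' i j ∈ Icc 0 M) (hπ : ∀ j, 0 ≤ π j) (hπ1 : ∑ j, π j = 1)
    (hγ : ∀ i, γ i ∈ Icc 0 M) (h0 : z 0 = z' 0)
    (hz : ∀ i, ∀ t ∈ Ici (0 : ℝ),
      HasDerivWithinAt (fun s => z s i) (sisDrift W π γ (z t) i) (Ici 0) t)
    (hz' : ∀ i, ∀ t ∈ Ici (0 : ℝ),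
      HasDerivWithinAt (fun s => z' s i) (sisDrift W' π γ (z' t) i) (Ici 0) t)
    (hz01 : ∀ t ∈ Ici (0 : ℝ), ∀ i, z t i ∈ Icc 0 1)
    (hz'01 : ∀ t ∈ Ici (0 : ℝ), ∀ i, z' t i ∈ Icc 0 1)
    {t : ℝ} (ht : 0 ≤ t) :
    ∑ i, |z t i - z' t i| * π i ≤
      ∫ s in 0..t, (∑ i, |weightedMulVec W π (z s) i - weightedMulVec W' π (z s) i| * π i +
        3 * M * ∑ i, |z s i - z' s i| * π i) := by
  have hsub : Icc 0 t ⊆ Ici (0 : ℝ) := Icc_subset_Ici_self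
  have hzc : ContinuousOn z (Icc 0 t) :=
    continuousOn_pi.2 fun i s hs => (hz i s hs.1).continuousWithinAt.mono hsub
  have hz'c : ContinuousOn z' (Icc 0 t) :=
    continuousOn_pi.2 fun i s hs => (hz' i s hs.1).continuousWithinAt.mono hsub
  have hF : ∀ i, ContinuousOn (fun s => sisDrift W π γ (z s) i) (Icc 0 t) := fun i =>
    (continuous_sisDrift W π γ i).comp_continuousOn hzc
  have hF' : ∀ i, ContinuousOn (fun s => sisDrift W' π γ (z' s) i) (Icc 0 t) := fun i =>
    (continuous_sisDrift W' π γ i).comp_continuousOn hz'c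
  refine (sum_abs_sub_mul_le_integral hπ ht h0 hz hz' hF hF').trans <|
    integral_mono_on ht ?_ ?_ fun s hs =>
      sum_abs_sisDrift_sub_mul_le hW' hπ hπ1 hγ (hz01 s hs.1) (hz'01 s hs.1)
  · exact ContinuousOn.intervalIntegrable_of_Icc ht (by fun_prop)
  · exact ContinuousOn.intervalIntegrable_of_Icc ht (by unfold weightedMulVec; fun_prop)

end

theorem stmt_3_general {n : ℕ} (M : ℝ) (hM : 0 ≤ M)
    (W W' : Matrix (Fin n) (Fin n) ℝ) (pv γ : Fin n → ℝ)
    (z z' : ℝ → Fin n → ℝ)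
    (hW'b : ∀ i j, W' i j ∈ Set.Icc (0 : ℝ) M)
    (hpv : ∀ i, 0 ≤ pv i) (hpv1 : ∑ i, pv i = 1)
    (hγ : ∀ i, γ i ∈ Set.Icc (0 : ℝ) M)
    (hinit : z' 0 = z 0)
    (hode : ∀ i, ∀ t ∈ Set.Ici (0 : ℝ), HasDerivWithinAt (fun s => z s i)
      ((1 - z t i) * (∑ j, W i j * pv j * z t j) - γ i * z t i) (Set.Ici 0) t)
    (hode' : ∀ i, ∀ t ∈ Set.Ici (0 : ℝ), HasDerivWithinAt (fun s => z' s i)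
      ((1 - z' t i) * (∑ j, W' i j * pv j * z' t j) - γ i * z' t i) (Set.Ici 0) t)
    (hz01 : ∀ t ∈ Set.Ici (0 : ℝ), ∀ i, z t i ∈ Set.Icc (0 : ℝ) 1)
    (hz01' : ∀ t ∈ Set.Ici (0 : ℝ), ∀ i, z' t i ∈ Set.Icc (0 : ℝ) 1)
    (T : ℝ) (hT : 0 < T) :
    (∀ t ∈ Set.Icc (0 : ℝ) T,
      ∑ i, |z t i - z' t i| * pv i ≤
        Real.exp (3 * M * T) *
          ∫ s in (0 : ℝ)..T,
            ∑ i, |(∑ j, W i j * pv j * z s j) - (∑ j, W' i j * pv j * z s j)| * pv i) ∧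
    Real.exp (3 * M * T) *
        (∫ s in (0 : ℝ)..T,
          ∑ i, |(∑ j, W i j * pv j * z s j) - (∑ j, W' i j * pv j * z s j)| * pv i) ≤
      Real.sqrt T * Real.exp (3 * M * T) *
        Real.sqrt (∫ s in (0 : ℝ)..T,
          ∑ i, ((∑ j, W i j * pv j * z s j) - (∑ j, W' i j * pv j * z s j)) ^ 2 * pv i) := by
  have hz : ContinuousOn z (Icc 0 T) :=
    continuousOn_pi.2 fun i t ht => (hode i t ht.1).continuousWithinAt.mono Icc_subset_Ici_self
  have hz' : ContinuousOn z' (Icc 0 T) :=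
    continuousOn_pi.2 fun i t ht => (hode' i t ht.1).continuousWithinAt.mono Icc_subset_Ici_self
  let e : ℝ → ℝ := fun s => ∑ i, |z s i - z' s i| * pv i
  let h : ℝ → ℝ := fun s =>
    ∑ i, |weightedMulVec W pv (z s) i - weightedMulVec W' pv (z s) i| * pv i
  let q : ℝ → ℝ := fun s =>
    ∑ i, (weightedMulVec W pv (z s) i - weightedMulVec W' pv (z s) i) ^ 2 * pv i
  have he : ContinuousOn e (Icc 0 T) := by fun_prop
  have hh : ContinuousOn h (Icc 0 T) := by unfold h weightedMulVec; fun_prop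
  have hq : ContinuousOn q (Icc 0 T) := by unfold q weightedMulVec; fun_prop
  have hgronwall := le_exp_mul_integral_of_le_integral_add_mul (by positivity) he hh
    (fun s _ => Finset.sum_nonneg fun i _ => mul_nonneg (abs_nonneg _) (hpv i))
    fun t ht =>
      sum_abs_sub_mul_le_integral_of_sis hW'b hpv hpv1 hγ hinit.symm hode hode' hz01 hz01' ht.1
  have hcauchySchwarz : ∫ s in 0..T, h s ≤ √(T - 0) * √(∫ s in 0..T, q s) :=
    integral_le_sqrt_mul_sqrt_integral hT.le hh hq fun s _ =>
      sq_sum_abs_mul_le_sum_sq_mul Finset.univ (fun i _ => hpv i) hpv1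
  rw [sub_zero] at hgronwall hcauchySchwarz
  refine ⟨hgronwall, ?_⟩
  calc Real.exp (3 * M * T) * ∫ s in 0..T, h s
      ≤ Real.exp (3 * M * T) * (√T * √(∫ s in 0..T, q s)) := by gcongr
    _ = √T * Real.exp (3 * M * T) * √(∫ s in 0..T, q s) := by ring

/-- Stability lemma with equal initial conditions and equal curing rates:
`sup_{0 ≤ t ≤ T} ‖z(t) − ẑ(t)‖_{1,π} ≤ e^{3MT} H_{1,T} ≤ √T e^{3MT} H_{2,T}`. -/
theorem stmt_3 {n : ℕ} (M : ℝ) (hM : 0 ≤ M)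
    (W W' : Matrix (Fin n) (Fin n) ℝ) (pv γ : Fin n → ℝ)
    (z z' : ℝ → Fin n → ℝ)
    (hWsymm : W.IsSymm) (hW'symm : W'.IsSymm)
    (hWb : ∀ i j, W i j ∈ Set.Icc (0 : ℝ) M) (hW'b : ∀ i j, W' i j ∈ Set.Icc (0 : ℝ) M)
    (hpv : ∀ i, 0 ≤ pv i) (hpv1 : ∑ i, pv i = 1)
    (hγ : ∀ i, γ i ∈ Set.Icc (0 : ℝ) M)
    (hinit : z' 0 = z 0)
    (hode : ∀ i, ∀ t ∈ Set.Ici (0 : ℝ), HasDerivWithinAt (fun s => z s i)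
      ((1 - z t i) * (∑ j, W i j * pv j * z t j) - γ i * z t i) (Set.Ici 0) t)
    (hode' : ∀ i, ∀ t ∈ Set.Ici (0 : ℝ), HasDerivWithinAt (fun s => z' s i)
      ((1 - z' t i) * (∑ j, W' i j * pv j * z' t j) - γ i * z' t i) (Set.Ici 0) t)
    (hz01 : ∀ t ∈ Set.Ici (0 : ℝ), ∀ i, z t i ∈ Set.Icc (0 : ℝ) 1)
    (hz01' : ∀ t ∈ Set.Ici (0 : ℝ), ∀ i, z' t i ∈ Set.Icc (0 : ℝ) 1)
    (T : ℝ) (hT : 0 < T) :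
    (∀ t ∈ Set.Icc (0 : ℝ) T,
      ∑ i, |z t i - z' t i| * pv i ≤
        Real.exp (3 * M * T) *
          ∫ s in (0 : ℝ)..T,
            ∑ i, |(∑ j, W i j * pv j * z s j) - (∑ j, W' i j * pv j * z s j)| * pv i) ∧
    Real.exp (3 * M * T) *
        (∫ s in (0 : ℝ)..T,
          ∑ i, |(∑ j, W i j * pv j * z s j) - (∑ j, W' i j * pv j * z s j)| * pv i) ≤
      Real.sqrt T * Real.exp (3 * M * T) *
        Real.sqrt (∫ s in (0 : ℝ)..T,
          ∑ i, ((∑ j, W i j * pv j * z s j) - (∑ j, W' i j * pv j * z s j)) ^ 2 * pv i) :=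
  stmt_3_general M hM W W' pv γ z z' hW'b hpv hpv1 hγ hinit hode hode' hz01 hz01' T hT
end

section
/- Let 0 < m ≤ 1/2, m ≤ M, and let p = (W, z(0), γ, π) be SIS parameters with m ≤ w_{ij} = w_{ji} ≤ M, m ≤ z_i(0) ≤ 1−m, 0 ≤ γ_i ≤ M, and π_i > 0 for all i, with trajectory z. Suppose there exist T₀ > 0 and a vector v ≠ 0 with ∫₀^{T₀} ⟨v, z(t)⟩² dt = 0. Then for every 0 < m' < m and M' > M there exists a symmetric matrix Ŵ ≠ W with m' ≤ ŵ_{ij} ≤ M' for all i,j such that the trajectory ẑ of the SIS model with parameters (Ŵ, z(0), γ, π) satisfies ẑ(t) = z(t) for all t ≥ 0. In particular, W is not reconstructible from the trajectory. -/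
/-!
The SIS vector field `x ↦ (1 - x) ∘ A x - γ ∘ x` is quadratic, so a bounded trajectory obeys
Cauchy estimates `‖z⁽ᵏ⁾‖ ≤ r k! ρᵏ` and is real-analytic on `[0, ∞)`. Hence `⟨v, z⟩`, which
vanishes on `[0, T₀]` because its square has zero integral, vanishes for all `t ≥ 0`: at a
point inside the zero set all derivatives vanish, and Taylor's theorem pushes the zero set
forward by a fixed step. With `u = Π⁻¹ v`, the symmetric matrix `Ŵ = W + ε u uᵀ` satisfies
`ŴΠ z = WΠ z + ε u ⟨v, z⟩ = WΠ z`, so `z` also solves the system for `Ŵ`, and a small `ε > 0`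
keeps the entries in `[m', M']`.
-/

open Set Filter Topology MeasureTheory
open scoped ContDiff Nat

theorem eqOn_zero_of_integral_sq_eq_zero {g : ℝ → ℝ} {a b : ℝ} (hab : a < b)
    (hg : ContinuousOn g (Icc a b)) (hint : ∫ t in a..b, g t ^ 2 = 0) :
    EqOn g 0 (Icc a b) := by
  have hg2 : ContinuousOn (fun t => g t ^ 2) (Icc a b) := hg.pow 2
  rw [intervalIntegral.integral_eq_zero_iff_of_le_of_nonneg_ae hab.le
    (.of_forall fun t => sq_nonneg (g t)) (hg2.intervalIntegrable_of_Icc hab.le),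
    Measure.restrict_congr_set Ioc_ae_eq_Icc] at hint
  intro t ht
  simpa using Measure.eqOn_Icc_of_ae_eq volume hab.ne hint hg2 continuousOn_const ht

theorem eq_zero_of_flat_of_abs_iteratedDerivWithin_le {g : ℝ → ℝ} {s : Set ℝ}
    {a t C R : ℝ}
    (hs : UniqueDiffOn ℝ s) (hat : a < t) (hsub : Icc a t ⊆ s) (hg : ContDiffOn ℝ ∞ g s)
    (hflat : ∀ k, iteratedDerivWithin k g s a = 0)
    (hbound : ∀ k, ∀ x ∈ Icc a t, |iteratedDerivWithin k g s x| ≤ C * k ! * R ^ k)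
    (hR : 0 ≤ R) (hRt : R * (t - a) < 1) : g t = 0 := by
  have hI : ∀ k, ∀ x ∈ Icc a t,
      iteratedDerivWithin k g (Icc a t) x = iteratedDerivWithin k g s x :=
    fun k x hx => by
      simp only [iteratedDerivWithin, iteratedFDerivWithin_subset hsub (uniqueDiffOn_Icc hat) hs
        (contDiffOn_infty.1 hg k) hx]
  set q := R * (t - a)
  have hq : 0 ≤ q := mul_nonneg hR (sub_nonneg.2 hat.le)
  have hremainder : ∀ N : ℕ, |g t| ≤ C * ((N + 1 : ℕ) * q ^ (N + 1)) := by
    intro N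
    have htaylor : taylorWithinEval g N (Icc a t) a t = 0 := by
      rw [taylor_within_apply]
      refine Finset.sum_eq_zero fun k _ => ?_
      rw [hI k a (left_mem_Icc.2 hat.le), hflat k, smul_zero]
    have := taylor_mean_remainder_bound hat.le ((contDiffOn_infty.1 hg (N + 1)).mono hsub)
      (right_mem_Icc.2 hat.le) fun x hx => (hI (N + 1) x hx ▸ hbound (N + 1) x hx)
    rw [htaylor, sub_zero, Real.norm_eq_abs] at this
    refine this.trans_eq ?_
    rw [Nat.factorial_succ, mul_pow]
    push_cast
    field_simp
  have hlim : Tendsto (fun N : ℕ => C * ((N + 1 : ℕ) * q ^ (N + 1))) atTop (𝓝 0) := by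
    simpa using ((tendsto_self_mul_const_pow_of_lt_one hq hRt).comp
      (tendsto_add_atTop_nat 1)).const_mul C
  exact abs_nonpos_iff.1 (ge_of_tendsto' hlim hremainder)

theorem eqOn_zero_Ici_of_eqOn_zero_Icc {g : ℝ → ℝ} {C R T₀ : ℝ}
    (hg : ContDiffOn ℝ ∞ g (Ici 0))
    (hbound : ∀ k, ∀ x ∈ Ici (0 : ℝ), |iteratedDerivWithin k g (Ici 0) x| ≤ C * k ! * R ^ k)
    (hR : 0 ≤ R) (hT₀ : 0 < T₀) (h0 : EqOn g 0 (Icc 0 T₀)) : EqOn g 0 (Ici 0) := by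
  set σ := T₀ / (2 * R * T₀ + 1)
  have hden : 0 < 2 * R * T₀ + 1 := by positivity
  have hσ : 0 < σ := div_pos hT₀ hden
  have hσT₀ : σ ≤ T₀ := div_le_self hT₀.le (by nlinarith [mul_nonneg hR hT₀.le])
  have hRσ : R * (2 * σ) < 1 := by
    rw [show R * (2 * σ) = 2 * R * T₀ / (2 * R * T₀ + 1) by ring, div_lt_one hden]
    linarith
  -- A zero set containing `[0, (j + 1) σ]` is flat at `j σ`; Taylor at `j σ` reaches `(j + 2) σ`.
  have hstep : ∀ j : ℕ, EqOn g 0 (Icc 0 ((j + 1) * σ)) := by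
    intro j
    induction j with
    | zero => simpa using h0.mono (Icc_subset_Icc_right hσT₀)
    | succ j ih =>
      intro t ht
      rcases le_or_gt t ((j + 1) * σ) with htj | htj
      · exact ih ⟨ht.1, htj⟩
      have hflat : ∀ k, iteratedDerivWithin k g (Ici 0) (j * σ) = 0 := by
        intro k
        have hev : g =ᶠ[𝓝[Ici 0] (j * σ)] 0 := by
          filter_upwards [inter_mem_nhdsWithin (Ici 0)
            (Iio_mem_nhds (by nlinarith : (j : ℝ) * σ < (j + 1) * σ))] with x hx
          exact ih ⟨hx.1, hx.2.le⟩
        rw [hev.iteratedDerivWithin_eq (ih ⟨by positivity, by nlinarith⟩),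
          iteratedDerivWithin_const_zero]
      refine eq_zero_of_flat_of_abs_iteratedDerivWithin_le (uniqueDiffOn_Ici 0) (by nlinarith)
        (Icc_subset_Ici_iff (by nlinarith) |>.2 (by positivity)) hg hflat
        (fun k x hx => hbound k x (le_trans (by positivity) hx.1)) hR ?_
      push_cast at ht
      calc R * (t - j * σ) ≤ R * (2 * σ) := mul_le_mul_of_nonneg_left (by linarith [ht.2]) hR
        _ < 1 := hRσ
  intro t ht
  obtain ⟨j, hj⟩ := exists_nat_ge (t / σ)
  exact hstep j ⟨ht, by rw [div_le_iff₀ hσ] at hj; nlinarith⟩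

theorem sum_choose_mul_le_of_le_factorial_mul_pow {a : ℕ → ℝ} {r ρ : ℝ} {k : ℕ}
    (ha₀ : ∀ i, 0 ≤ a i) (ha : ∀ i ≤ k, a i ≤ r * i ! * ρ ^ i) :
    ∑ i ∈ Finset.range (k + 1), (k.choose i : ℝ) * a i * a (k - i) ≤
      (k + 1) * (r ^ 2 * k ! * ρ ^ k) := by
  calc ∑ i ∈ Finset.range (k + 1), (k.choose i : ℝ) * a i * a (k - i)
      ≤ ∑ _i ∈ Finset.range (k + 1), r ^ 2 * k ! * ρ ^ k := by
        refine Finset.sum_le_sum fun i hi => ?_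
        have hik : i ≤ k := Nat.lt_succ_iff.1 (Finset.mem_range.1 hi)
        have hi := ha i hik
        calc (k.choose i : ℝ) * a i * a (k - i)
            ≤ k.choose i * (r * i ! * ρ ^ i) * (r * (k - i) ! * ρ ^ (k - i)) := by
              exact mul_le_mul (mul_le_mul_of_nonneg_left hi (Nat.cast_nonneg _))
                (ha (k - i) (Nat.sub_le k i)) (ha₀ _)
                (mul_nonneg (Nat.cast_nonneg _) ((ha₀ i).trans hi))
          _ = (k.choose i * i ! * (k - i) ! : ℕ) * r ^ 2 * (ρ ^ i * ρ ^ (k - i)) := by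
              push_cast; ring
          _ = r ^ 2 * k ! * ρ ^ k := by
              rw [Nat.choose_mul_factorial_mul_factorial hik, ← pow_add, Nat.add_sub_cancel' hik]
              ring
    _ = (k + 1) * (r ^ 2 * k ! * ρ ^ k) := by simp

section QuadraticODE

variable {E : Type*} [NormedAddCommGroup E] [NormedSpace ℝ E]
  (B : E →L[ℝ] E →L[ℝ] E) (L : E →L[ℝ] E) {z : ℝ → E} {s : Set ℝ}

theorem contDiffOn_of_hasDerivWithinAt_quadratic (hs : UniqueDiffOn ℝ s)
    (hz : ∀ t ∈ s, HasDerivWithinAt z (B (z t) (z t) + L (z t)) s t) :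
    ContDiffOn ℝ ∞ z s := by
  refine contDiffOn_infty.2 fun k => ?_
  induction k with
  | zero => exact contDiffOn_zero.2 fun t ht => (hz t ht).continuousWithinAt
  | succ k ih =>
    rw [Nat.cast_succ, contDiffOn_succ_iff_derivWithin hs]
    refine ⟨fun t ht => (hz t ht).differentiableWithinAt, by simp, ?_⟩
    exact (((B.contDiff.comp_contDiffOn ih).clm_apply ih).add
      (L.contDiff.comp_contDiffOn ih)).congr fun t ht => (hz t ht).derivWithin (hs t ht)

theorem norm_iteratedDerivWithin_le_of_hasDerivWithinAt_quadratic (hs : UniqueDiffOn ℝ s)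
    (hz : ∀ t ∈ s, HasDerivWithinAt z (B (z t) (z t) + L (z t)) s t) {r : ℝ}
    (hzr : ∀ t ∈ s, ‖z t‖ ≤ r) (k : ℕ) :
    ∀ t ∈ s, ‖iteratedDerivWithin k z s t‖ ≤ r * k ! * (‖B‖ * r + ‖L‖) ^ k := by
  have hsmooth := contDiffOn_infty.1 (contDiffOn_of_hasDerivWithinAt_quadratic B L hs hz)
  set ρ := ‖B‖ * r + ‖L‖
  induction k using Nat.strong_induction_on with
  | _ k ih =>
  intro t ht
  have hr : 0 ≤ r := (norm_nonneg _).trans (hzr t ht)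
  rcases k with _ | k
  · simpa using hzr t ht
  have ih' : ∀ i ≤ k, ‖iteratedFDerivWithin ℝ i z s t‖ ≤ r * i ! * ρ ^ i := by
    intro i hi
    simpa only [norm_iteratedFDerivWithin_eq_norm_iteratedDerivWithin] using
      ih i (Nat.lt_succ_of_le hi) t ht
  have hquad : ‖iteratedFDerivWithin ℝ k (fun t => B (z t) (z t)) s t‖ ≤
      ‖B‖ * ((k + 1) * (r ^ 2 * k ! * ρ ^ k)) :=
    (B.norm_iteratedFDerivWithin_le_of_bilinear (hsmooth k) (hsmooth k) hs ht le_rfl).trans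
      (mul_le_mul_of_nonneg_left (sum_choose_mul_le_of_le_factorial_mul_pow
        (fun i => norm_nonneg _) ih') (norm_nonneg B))
  have hlin : ‖iteratedFDerivWithin ℝ k (L ∘ z) s t‖ ≤ ‖L‖ * ((k + 1) * (r * k ! * ρ ^ k)) := by
    rw [L.iteratedFDerivWithin_comp_left (hsmooth k t ht) hs ht le_rfl]
    refine (L.norm_compContinuousMultilinearMap_le _).trans
      (mul_le_mul_of_nonneg_left ((ih' k le_rfl).trans ?_) (norm_nonneg L))
    exact le_mul_of_one_le_left (by positivity) (by linarith [(k.cast_nonneg : (0 : ℝ) ≤ k)])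
  have hderiv : EqOn (derivWithin z s) ((fun t => B (z t) (z t)) + L ∘ z) s :=
    fun t ht => (hz t ht).derivWithin (hs t ht)
  have hquad_smooth : ContDiffWithinAt ℝ k (fun t => B (z t) (z t)) s t :=
    (B.contDiff.comp_contDiffOn (hsmooth k)).clm_apply (hsmooth k) t ht
  rw [iteratedDerivWithin_succ', iteratedDerivWithin_congr hderiv ht,
    ← norm_iteratedFDerivWithin_eq_norm_iteratedDerivWithin,
    iteratedFDerivWithin_add_apply hquad_smooth (L.contDiff.comp_contDiffOn (hsmooth k) t ht) hs ht]
  calc _ ≤ _ := norm_add_le _ _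
    _ ≤ ‖B‖ * ((k + 1) * (r ^ 2 * k ! * ρ ^ k)) + ‖L‖ * ((k + 1) * (r * k ! * ρ ^ k)) :=
        add_le_add hquad hlin
    _ = r * (k + 1 : ℕ) ! * ρ ^ (k + 1) := by
        rw [Nat.factorial_succ, pow_succ]; push_cast; ring

theorem eqOn_zero_of_hasDerivWithinAt_quadratic
    (hz : ∀ t ∈ Ici (0 : ℝ), HasDerivWithinAt z (B (z t) (z t) + L (z t)) (Ici 0) t)
    {r : ℝ} (hzr : ∀ t ∈ Ici (0 : ℝ), ‖z t‖ ≤ r) (ℓ : E →L[ℝ] ℝ) {T₀ : ℝ} (hT₀ : 0 < T₀)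
    (h0 : EqOn (ℓ ∘ z) 0 (Icc 0 T₀)) : EqOn (ℓ ∘ z) 0 (Ici 0) := by
  have hs := uniqueDiffOn_Ici (0 : ℝ)
  have hsmooth := contDiffOn_of_hasDerivWithinAt_quadratic B L hs hz
  have hr : 0 ≤ r := (norm_nonneg _).trans (hzr 0 self_mem_Ici)
  refine eqOn_zero_Ici_of_eqOn_zero_Icc (C := ‖ℓ‖ * r) (ℓ.contDiff.comp_contDiffOn hsmooth)
    (fun k t ht => ?_) (by positivity : 0 ≤ ‖B‖ * r + ‖L‖) hT₀ h0
  rw [← Real.norm_eq_abs, ← norm_iteratedFDerivWithin_eq_norm_iteratedDerivWithin,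
    ℓ.iteratedFDerivWithin_comp_left (contDiffOn_infty.1 hsmooth k t ht) hs ht le_rfl]
  calc _ ≤ ‖ℓ‖ * ‖iteratedFDerivWithin ℝ k z (Ici 0) t‖ :=
        ℓ.norm_compContinuousMultilinearMap_le _
    _ ≤ ‖ℓ‖ * (r * k ! * (‖B‖ * r + ‖L‖) ^ k) := by
        rw [norm_iteratedFDerivWithin_eq_norm_iteratedDerivWithin]
        exact mul_le_mul_of_nonneg_left
          (norm_iteratedDerivWithin_le_of_hasDerivWithinAt_quadratic B L hs hz hzr k t ht)
          (norm_nonneg ℓ)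
    _ = ‖ℓ‖ * r * k ! * (‖B‖ * r + ‖L‖) ^ k := by ring

end QuadraticODE

theorem exists_pos_abs_mul_mul_le {ι : Type*} [Fintype ι] (u : ι → ℝ) {δ : ℝ}
    (hδ : 0 < δ) :
    ∃ ε > 0, ∀ i j, |ε * (u i * u j)| ≤ δ := by
  have hK : 0 < ‖u‖ ^ 2 + 1 := by positivity
  refine ⟨δ / (‖u‖ ^ 2 + 1), div_pos hδ hK, fun i j => ?_⟩
  have hu : |u i * u j| ≤ ‖u‖ ^ 2 + 1 := by
    rw [abs_mul, sq]
    have := mul_le_mul (norm_le_pi_norm u i) (norm_le_pi_norm u j) (norm_nonneg _)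
      (norm_nonneg u)
    simp only [Real.norm_eq_abs] at this
    linarith
  rw [abs_mul, abs_of_pos (div_pos hδ hK)]
  calc δ / (‖u‖ ^ 2 + 1) * |u i * u j|
      ≤ δ / (‖u‖ ^ 2 + 1) * (‖u‖ ^ 2 + 1) := by gcongr
    _ = δ := div_mul_cancel₀ δ hK.ne'

noncomputable def couplingOperator {n : ℕ} (W : Matrix (Fin n) (Fin n) ℝ) (pv : Fin n → ℝ) :
    (Fin n → ℝ) →L[ℝ] (Fin n → ℝ) :=
  LinearMap.toContinuousLinearMap (W * Matrix.diagonal pv).mulVecLin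

@[simp]
theorem couplingOperator_apply {n : ℕ} (W : Matrix (Fin n) (Fin n) ℝ) (pv x : Fin n → ℝ)
    (i : Fin n) :
    couplingOperator W pv x i = ∑ j, W i j * pv j * x j := by
  change (W * Matrix.diagonal pv).mulVec x i = _
  simp [Matrix.mulVec, dotProduct, Matrix.mul_diagonal]

theorem hasDerivWithinAt_sis {n : ℕ} (W : Matrix (Fin n) (Fin n) ℝ) (pv γ : Fin n → ℝ)
    {z : ℝ → Fin n → ℝ} {s : Set ℝ} {t : ℝ}
    (hode : ∀ i, HasDerivWithinAt (fun s => z s i)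
      ((1 - z t i) * (∑ j, W i j * pv j * z t j) - γ i * z t i) s t) :
    HasDerivWithinAt z
      ((-(ContinuousLinearMap.mul ℝ (Fin n → ℝ)).bilinearComp (.id ℝ _)
          (couplingOperator W pv)) (z t) (z t) +
        (couplingOperator W pv - ContinuousLinearMap.mul ℝ (Fin n → ℝ) γ) (z t)) s t := by
  refine hasDerivWithinAt_pi.2 fun i => ?_
  refine (hode i).congr_deriv ?_
  simp only [neg_apply, ContinuousLinearMap.bilinearComp_apply, ContinuousLinearMap.id_apply,
    ContinuousLinearMap.mul_apply', sub_apply, Pi.add_apply, Pi.neg_apply, Pi.mul_apply,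
    couplingOperator_apply, Pi.sub_apply]
  ring

theorem stmt_4_general {n : ℕ} (m M : ℝ)
    (W : Matrix (Fin n) (Fin n) ℝ) (pv γ : Fin n → ℝ)
    (z : ℝ → Fin n → ℝ)
    (hWsymm : W.IsSymm) (hWb : ∀ i j, W i j ∈ Set.Icc m M)
    (hpv : ∀ i, 0 < pv i)
    (hode : ∀ i, ∀ t ∈ Set.Ici (0 : ℝ), HasDerivWithinAt (fun s => z s i)
      ((1 - z t i) * (∑ j, W i j * pv j * z t j) - γ i * z t i) (Set.Ici 0) t)
    (hz01 : ∀ t ∈ Set.Ici (0 : ℝ), ∀ i, z t i ∈ Set.Icc (0 : ℝ) 1)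
    (T₀ : ℝ) (hT₀ : 0 < T₀)
    (v : Fin n → ℝ) (hv : v ≠ 0)
    (hint : ∫ t in (0 : ℝ)..T₀, (∑ i, v i * z t i) ^ 2 = 0)
    (m' M' : ℝ) (hm'm : m' < m) (hMM' : M < M') :
    ∃ W' : Matrix (Fin n) (Fin n) ℝ, W' ≠ W ∧ W'.IsSymm ∧
      (∀ i j, W' i j ∈ Set.Icc m' M') ∧
      (∀ i, ∀ t ∈ Set.Ici (0 : ℝ), HasDerivWithinAt (fun s => z s i)
        ((1 - z t i) * (∑ j, W' i j * pv j * z t j) - γ i * z t i) (Set.Ici 0) t) := by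
  set ℓ : (Fin n → ℝ) →L[ℝ] ℝ := ∑ i, v i • ContinuousLinearMap.proj i
  have hℓ : ℓ ∘ z = fun t => ∑ i, v i * z t i := by ext t; simp [ℓ]
  have hzr : ∀ t ∈ Ici (0 : ℝ), ‖z t‖ ≤ 1 := fun t ht =>
    (pi_norm_le_iff_of_nonneg zero_le_one).2 fun i => by
      rw [Real.norm_eq_abs, abs_of_nonneg (hz01 t ht i).1]; exact (hz01 t ht i).2
  have hcont : ContinuousOn (fun t => ∑ i, v i * z t i) (Icc 0 T₀) := by
    refine continuousOn_finsetSum _ fun i _ => continuousOn_const.mul fun t ht => ?_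
    exact (hode i t ht.1).continuousWithinAt.mono Icc_subset_Ici_self
  have h0 : EqOn (ℓ ∘ z) 0 (Icc 0 T₀) := hℓ ▸ eqOn_zero_of_integral_sq_eq_zero hT₀ hcont hint
  have hvz : EqOn (ℓ ∘ z) 0 (Ici 0) := eqOn_zero_of_hasDerivWithinAt_quadratic _ _
    (fun t ht => hasDerivWithinAt_sis W pv γ fun i => hode i t ht) hzr ℓ hT₀ h0
  set u : Fin n → ℝ := fun i => v i / pv i
  obtain ⟨i₀, hi₀⟩ := Function.ne_iff.1 hv
  obtain ⟨ε, hε, hεu⟩ :=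
    exists_pos_abs_mul_mul_le u (lt_min (sub_pos.2 hm'm) (sub_pos.2 hMM'))
  have hW' : ∀ i j, (W + ε • Matrix.vecMulVec u u) i j = W i j + ε * (u i * u j) := by
    simp [Matrix.vecMulVec_apply]
  refine ⟨W + ε • Matrix.vecMulVec u u, fun h => ?_, ?_, fun i j => ?_, fun i t ht => ?_⟩
  · have := hW' i₀ i₀
    rw [h, left_eq_add] at this
    exact mul_ne_zero hε.ne' (mul_self_ne_zero.2 (div_ne_zero hi₀ (hpv i₀).ne')) this
  · exact hWsymm.add
      ((show (Matrix.vecMulVec u u).IsSymm from Matrix.transpose_vecMulVec u u).smul ε)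
  · have h₁ := abs_le.1 ((hεu i j).trans (min_le_left _ _))
    have h₂ := abs_le.1 ((hεu i j).trans (min_le_right _ _))
    rw [hW']
    constructor <;> linarith [(hWb i j).1, (hWb i j).2]
  · have hsum : ∑ j, (W + ε • Matrix.vecMulVec u u) i j * pv j * z t j =
        ∑ j, W i j * pv j * z t j + ε * u i * ∑ j, v j * z t j := by
      simp only [hW', Finset.mul_sum, ← Finset.sum_add_distrib]
      refine Finset.sum_congr rfl fun j _ => ?_
      simp only [u]; field_simp [(hpv j).ne']
    rw [hsum, show ∑ j, v j * z t j = 0 from (congrFun hℓ t).symm.trans (hvz ht), mul_zero,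
      add_zero]
    exact hode i t ht

/-- If some nonzero `v` satisfies `∫₀^{T₀} ⟨v, z(t)⟩² dt = 0`, then for any
`0 < m' < m` and `M' > M` there is a symmetric matrix `Ŵ ≠ W` with entries in
`[m', M']` such that `z` itself solves the SIS system with weights `Ŵ`
(i.e. the trajectory of `(Ŵ, z(0), γ, π)` coincides with `z`); hence `W` is not
reconstructible from the trajectory. -/
theorem stmt_4 {n : ℕ} (m M : ℝ) (hm : 0 < m) (hm2 : m ≤ 1 / 2) (hmM : m ≤ M)
    (W : Matrix (Fin n) (Fin n) ℝ) (pv γ : Fin n → ℝ)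
    (z : ℝ → Fin n → ℝ)
    (hWsymm : W.IsSymm) (hWb : ∀ i j, W i j ∈ Set.Icc m M)
    (hz0 : ∀ i, z 0 i ∈ Set.Icc m (1 - m))
    (hγ : ∀ i, γ i ∈ Set.Icc (0 : ℝ) M)
    (hpv : ∀ i, 0 < pv i) (hpv1 : ∑ i, pv i = 1)
    (hode : ∀ i, ∀ t ∈ Set.Ici (0 : ℝ), HasDerivWithinAt (fun s => z s i)
      ((1 - z t i) * (∑ j, W i j * pv j * z t j) - γ i * z t i) (Set.Ici 0) t)
    (hz01 : ∀ t ∈ Set.Ici (0 : ℝ), ∀ i, z t i ∈ Set.Icc (0 : ℝ) 1)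
    (T₀ : ℝ) (hT₀ : 0 < T₀)
    (v : Fin n → ℝ) (hv : v ≠ 0)
    (hint : ∫ t in (0 : ℝ)..T₀, (∑ i, v i * z t i) ^ 2 = 0)
    (m' M' : ℝ) (hm' : 0 < m') (hm'm : m' < m) (hMM' : M < M') :
    ∃ W' : Matrix (Fin n) (Fin n) ℝ, W' ≠ W ∧ W'.IsSymm ∧
      (∀ i j, W' i j ∈ Set.Icc m' M') ∧
      (∀ i, ∀ t ∈ Set.Ici (0 : ℝ), HasDerivWithinAt (fun s => z s i)
        ((1 - z t i) * (∑ j, W' i j * pv j * z t j) - γ i * z t i) (Set.Ici 0) t) :=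
  stmt_4_general m M W pv γ z hWsymm hWb hpv hode hz01 T₀ hT₀ v hv hint m' M' hm'm hMM'
end

section
/- Let 0 < m ≤ 1/2, m ≤ M, and let p = (W, z(0), γ, π) be SIS parameters with m ≤ w_{ij} = w_{ji} ≤ M and m ≤ z_i(0) ≤ 1−m for all i, j, γ = 0 (the SI model), π_i > 0 for all i, and suppose the degrees d_i := Σ_j (WΠ)_{ij} are pairwise distinct. Then W is reconstructible: for every T₀ > 0, if Ŵ is a symmetric matrix with m ≤ ŵ_{ij} ≤ M whose trajectory ẑ with parameters (Ŵ, z(0), 0, π) satisfies ẑ(t) = z(t) for all t ∈ [0,T₀], then Ŵ = W. -/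
/-!
Fix a row `i` and let `c_j = (ŵ_ij - w_ij) π_j`. Where the two trajectories agree, comparing the
equations for `z_i` (and using `z_i < 1`) gives `c ⬝ᵥ z(t) = 0`. The `k`-th derivatives of an SI
trajectory are bounded by `k! (2M)^k`, so a function of the form `c ⬝ᵥ z` vanishing on `[0, τ]`
also vanishes on `[0, τ + 1/(4M)]` by a Taylor estimate, and hence on all of `[0, ∞)`. Finally
`1 - z_j(t)` is of exact order `e^{-d_j t}`: letting `t → ∞` gives `∑ c_j = 0`, hence
`∑ c_j (1 - z_j(t)) = 0`, and since the degrees are distinct the term with the smallest rate among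
the `c_j ≠ 0` cannot be cancelled by the others. So `c = 0`, i.e. `ŵ_ij = w_ij`.
-/

open Finset Set Filter Real Asymptotics Matrix
open scoped Nat Topology

theorem monotoneOn_Ici_of_hasDerivWithinAt_nonneg {a : ℝ} {f f' : ℝ → ℝ}
    (hf : ∀ t ∈ Ici a, HasDerivWithinAt f (f' t) (Ici a) t) (hf' : ∀ t ∈ Ici a, 0 ≤ f' t) :
    MonotoneOn f (Ici a) :=
  monotoneOn_of_hasDerivWithinAt_nonneg (convex_Ici a) (fun t ht => (hf t ht).continuousWithinAt)
    (by rw [interior_Ici]; exact fun t ht => (hf t (mem_Ioi.1 ht).le).mono Ioi_subset_Ici_self)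
    (by rw [interior_Ici]; exact fun t ht => hf' t (mem_Ioi.1 ht).le)

theorem antitoneOn_Ici_of_hasDerivWithinAt_nonpos {a : ℝ} {f f' : ℝ → ℝ}
    (hf : ∀ t ∈ Ici a, HasDerivWithinAt f (f' t) (Ici a) t) (hf' : ∀ t ∈ Ici a, f' t ≤ 0) :
    AntitoneOn f (Ici a) :=
  antitoneOn_of_hasDerivWithinAt_nonpos (convex_Ici a) (fun t ht => (hf t ht).continuousWithinAt)
    (by rw [interior_Ici]; exact fun t ht => (hf t (mem_Ioi.1 ht).le).mono Ioi_subset_Ici_self)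
    (by rw [interior_Ici]; exact fun t ht => hf' t (mem_Ioi.1 ht).le)

theorem HasDerivWithinAt.eq_of_eqOn_Icc {f g : ℝ → ℝ} {f' g' a b t : ℝ}
    (hf : HasDerivWithinAt f f' (Ici a) t) (hg : HasDerivWithinAt g g' (Ici a) t)
    (hab : a < b) (ht : t ∈ Icc a b) (hfg : EqOn f g (Icc a b)) : f' = g' :=
  (uniqueDiffOn_Icc hab t ht).eq_deriv _
    ((hf.mono Icc_subset_Ici_self).congr hfg.symm (hfg ht).symm) (hg.mono Icc_subset_Ici_self)

theorem monotoneOn_mul_exp_of_le {a : ℝ} {y r P p : ℝ → ℝ}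
    (hy : ∀ t ∈ Ici a, HasDerivWithinAt y (-(y t * r t)) (Ici a) t)
    (hP : ∀ t, HasDerivAt P (p t) t) (hy0 : ∀ t ∈ Ici a, 0 ≤ y t)
    (hrp : ∀ t ∈ Ici a, r t ≤ p t) : MonotoneOn (fun t => y t * exp (P t)) (Ici a) :=
  monotoneOn_Ici_of_hasDerivWithinAt_nonneg (fun t ht => (hy t ht).mul (hP t).exp.hasDerivWithinAt)
    fun t ht => by
      have h := mul_nonneg (mul_nonneg (hy0 t ht) (exp_pos (P t)).le) (sub_nonneg.2 (hrp t ht))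
      linarith

theorem antitoneOn_mul_exp_of_le {a : ℝ} {y r P p : ℝ → ℝ}
    (hy : ∀ t ∈ Ici a, HasDerivWithinAt y (-(y t * r t)) (Ici a) t)
    (hP : ∀ t, HasDerivAt P (p t) t) (hy0 : ∀ t ∈ Ici a, 0 ≤ y t)
    (hpr : ∀ t ∈ Ici a, p t ≤ r t) : AntitoneOn (fun t => y t * exp (P t)) (Ici a) :=
  antitoneOn_Ici_of_hasDerivWithinAt_nonpos (fun t ht => (hy t ht).mul (hP t).exp.hasDerivWithinAt)
    fun t ht => by
      have h := mul_nonneg (mul_nonneg (hy0 t ht) (exp_pos (P t)).le) (sub_nonneg.2 (hpr t ht))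
      linarith

section DerivativeChain

variable {g : ℕ → ℝ → ℝ} {a : ℝ}

theorem chain_eqOn_zero_Icc
    (hg : ∀ k, ∀ t ∈ Ici a, HasDerivWithinAt (g k) (g (k + 1) t) (Ici a) t) {τ : ℝ}
    (hτ : a < τ) (h0 : EqOn (g 0) 0 (Icc a τ)) (k : ℕ) : EqOn (g k) 0 (Icc a τ) := by
  induction k with
  | zero => exact h0
  | succ k ih =>
    exact fun t ht => (hg k t ht.1).eq_of_eqOn_Icc (hasDerivWithinAt_const t _ 0) hτ ht ih

theorem abs_le_of_chain_vanishing_at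
    (hg : ∀ k, ∀ t ∈ Ici a, HasDerivWithinAt (g k) (g (k + 1) t) (Ici a) t) {C B τ : ℝ}
    (hbound : ∀ k, ∀ t ∈ Ici a, |g k t| ≤ C * k ! * B ^ k) (hτ : a ≤ τ) (hgτ : ∀ k, g k τ = 0)
    (r : ℕ) : ∀ j, ∀ s ∈ Ici τ, |g j s| ≤ C * (j + r)! * B ^ (j + r) * (s - τ) ^ r / r ! := by
  induction r with
  | zero => exact fun j s hs => by simpa using hbound j s (hτ.trans hs)
  | succ r ih =>
    intro j s hs
    have hgj : ∀ x ∈ Ici τ, HasDerivWithinAt (g j) (g (j + 1) x) (Ici τ) x := fun x hx =>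
      (hg j x (hτ.trans hx)).mono (Ici_subset_Ici.2 hτ)
    have hK : ∀ x, HasDerivAt
        (fun x => C * (j + (r + 1))! * B ^ (j + (r + 1)) * (x - τ) ^ (r + 1) / (r + 1)!)
        (C * (j + 1 + r)! * B ^ (j + 1 + r) * (x - τ) ^ r / r !) x := by
      intro x
      refine ((((hasDerivAt_id' x).sub_const τ).pow (r + 1)).const_mul
        (C * (j + (r + 1))! * B ^ (j + (r + 1)))).div_const ((r + 1)! : ℝ) |>.congr_deriv ?_
      rw [show j + 1 + r = j + (r + 1) by omega, Nat.factorial_succ]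
      push_cast
      field_simp
    refine image_norm_le_of_norm_deriv_right_le_deriv_boundary
      (fun x hx => (hgj x hx.1).continuousWithinAt.mono Icc_subset_Ici_self)
      (fun x hx => (hgj x hx.1).mono (Ici_subset_Ici.2 hx.1)) ?_ hK
      (fun x hx => ih (j + 1) x hx.1) ⟨hs, le_rfl⟩
    simp [hgτ]

theorem chain_eqOn_zero_Icc_add
    (hg : ∀ k, ∀ t ∈ Ici a, HasDerivWithinAt (g k) (g (k + 1) t) (Ici a) t) {C B τ : ℝ}
    (hB : 0 < B) (hbound : ∀ k, ∀ t ∈ Ici a, |g k t| ≤ C * k ! * B ^ k) (hτ : a < τ)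
    (h0 : EqOn (g 0) 0 (Icc a τ)) : EqOn (g 0) 0 (Icc a (τ + 1 / (2 * B))) := by
  intro s hs
  rcases le_or_gt s τ with hsτ | hsτ
  · exact h0 ⟨hs.1, hsτ⟩
  have hC : 0 ≤ C := by simpa using (abs_nonneg _).trans (hbound 0 a self_mem_Ici)
  have hq : B * (s - τ) ≤ 1 / 2 := calc
    B * (s - τ) ≤ B * (1 / (2 * B)) := by gcongr; linarith [hs.2]
    _ = 1 / 2 := by field_simp
  have hle : ∀ r : ℕ, |g 0 s| ≤ C * (1 / 2) ^ r := fun r => calc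
    |g 0 s| ≤ C * r ! * B ^ r * (s - τ) ^ r / r ! := by
      simpa using abs_le_of_chain_vanishing_at hg hbound hτ.le
        (fun k => chain_eqOn_zero_Icc hg hτ h0 k ⟨hτ.le, le_rfl⟩) r 0 s hsτ.le
    _ = C * (B * (s - τ)) ^ r := by rw [mul_pow]; field_simp
    _ ≤ C * (1 / 2) ^ r := by gcongr
  have hlim : Tendsto (fun r : ℕ => C * (1 / 2 : ℝ) ^ r) atTop (𝓝 0) := by
    simpa using (tendsto_pow_atTop_nhds_zero_of_lt_one (by norm_num) one_half_lt_one).const_mul C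
  exact abs_nonpos_iff.1 (ge_of_tendsto' hlim hle)

theorem chain_eqOn_zero_Ici
    (hg : ∀ k, ∀ t ∈ Ici a, HasDerivWithinAt (g k) (g (k + 1) t) (Ici a) t) {C B τ : ℝ}
    (hB : 0 < B) (hbound : ∀ k, ∀ t ∈ Ici a, |g k t| ≤ C * k ! * B ^ k) (hτ : a < τ)
    (h0 : EqOn (g 0) 0 (Icc a τ)) : EqOn (g 0) 0 (Ici a) := by
  have hstep : ∀ N : ℕ, EqOn (g 0) 0 (Icc a (τ + N * (1 / (2 * B)))) := by
    intro N
    induction N with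
    | zero => simpa using h0
    | succ N ih =>
      have hτN : a < τ + N * (1 / (2 * B)) := by
        have : 0 ≤ (N : ℝ) * (1 / (2 * B)) := by positivity
        linarith
      have := chain_eqOn_zero_Icc_add hg hB hbound hτN ih
      rwa [add_assoc, ← add_one_mul, ← Nat.cast_add_one] at this
  intro t ht
  obtain ⟨N, hN⟩ := exists_nat_ge ((t - τ) * (2 * B))
  refine hstep N ⟨ht, ?_⟩
  rw [mul_one_div, ← sub_le_iff_le_add', le_div_iff₀ (by positivity)]
  exact hN

end DerivativeChain

theorem eq_zero_of_sum_mul_eq_zero_of_isTheta_exp {ι : Type*} [Fintype ι] {y : ι → ℝ → ℝ}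
    {d : ι → ℝ} (hd : Function.Injective d) (hy : ∀ i, y i =Θ[atTop] fun t => exp (-(d i * t)))
    {c : ι → ℝ} (hc : ∀ᶠ t in atTop, ∑ i, c i * y i t = 0) : c = 0 := by
  classical
  by_contra hne
  obtain ⟨i₀, hi₀, hmin⟩ := (univ.filter (c · ≠ 0)).exists_min_image d <| by
    simpa [Finset.Nonempty, funext_iff] using hne
  have hci₀ : c i₀ ≠ 0 := (mem_filter.1 hi₀).2
  have hsmall : ∀ i ∈ univ.erase i₀, (fun t => c i * y i t) =o[atTop] y i₀ := by
    intro i hi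
    by_cases hci : c i = 0
    · simp [hci]
    have hlt : d i₀ < d i := (hmin i (mem_filter.2 ⟨mem_univ _, hci⟩)).lt_of_ne
      (hd.ne (ne_of_mem_erase hi).symm)
    have hexp : (fun t => exp (-(d i * t))) =o[atTop] fun t => exp (-(d i₀ * t)) :=
      isLittleO_exp_comp_exp_comp.2 <| by
        refine (tendsto_id.const_mul_atTop (sub_pos.2 hlt)).congr fun t => ?_
        simp only [id]
        ring
    exact (((hy i).isBigO.trans_isLittleO hexp).trans_isBigO (hy i₀).symm.isBigO).const_mul_left _
  have hself : (fun t => c i₀ * y i₀ t) =o[atTop] y i₀ := by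
    refine (IsLittleO.fun_sum hsmall).neg_left.congr' ?_ EventuallyEq.rfl
    filter_upwards [hc] with t ht
    rw [← add_sum_erase _ _ (mem_univ i₀)] at ht
    linarith
  refine isLittleO_irrefl ?_ ((isLittleO_const_mul_left_iff hci₀).1 hself)
  exact ((hy i₀).eq_zero_iff.mono fun t ht h => exp_ne_zero _ (ht.1 h)).frequently

variable {ι : Type*} [Fintype ι]

theorem hasDerivWithinAt_mulVec_apply {κ : Type*} (A : Matrix κ ι ℝ) {f : ℝ → ι → ℝ}
    {f' : ι → ℝ} {s : Set ℝ} {t : ℝ} (hf : ∀ j, HasDerivWithinAt (fun u => f u j) (f' j) s t)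
    (i : κ) :
    HasDerivWithinAt (fun u => (A *ᵥ f u) i) ((A *ᵥ f') i) s t :=
  HasDerivWithinAt.fun_sum fun j _ => (hf j).const_mul (A i j)

theorem abs_mulVec_apply_le {κ : Type*} (A : Matrix κ ι ℝ) {v : ι → ℝ} {b : ℝ}
    (hv : ∀ j, |v j| ≤ b) (i : κ) : |(A *ᵥ v) i| ≤ (∑ j, |A i j|) * b := calc
  |(A *ᵥ v) i| ≤ ∑ j, |A i j| * |v j| := by
    simpa only [mulVec, dotProduct, abs_mul] using
      abs_sum_le_sum_abs (fun j => A i j * v j) univ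
  _ ≤ ∑ j, |A i j| * b :=
    sum_le_sum fun j _ => mul_le_mul_of_nonneg_left (hv j) (abs_nonneg _)
  _ = (∑ j, |A i j|) * b := by rw [sum_mul]

structure IsSITrajectory (A : Matrix ι ι ℝ) (z : ℝ → ι → ℝ) : Prop where
  hasDerivWithinAt : ∀ i, ∀ t ∈ Ici (0 : ℝ),
    HasDerivWithinAt (fun s => z s i) ((1 - z t i) * (A *ᵥ z t) i) (Ici 0) t
  mem_Icc : ∀ t ∈ Ici (0 : ℝ), ∀ i, z t i ∈ Icc (0 : ℝ) 1

/-- The `k`-th time derivative of a solution of `z' = (1 - z) * (A *ᵥ z)`, obtained by applying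
Leibniz's rule to the right-hand side. -/
noncomputable def siDerivSeq (A : Matrix ι ι ℝ) (z : ℝ → ι → ℝ) : ℕ → ℝ → ι → ℝ
  | 0 => z
  | k + 1 => fun t i => (A *ᵥ siDerivSeq A z k t) i -
      ∑ j : Fin (k + 1),
        (k.choose j : ℝ) * siDerivSeq A z j t i * (A *ᵥ siDerivSeq A z (k - j) t) i

namespace siDerivSeq

variable {A : Matrix ι ι ℝ} {z : ℝ → ι → ℝ}

theorem zero : siDerivSeq A z 0 = z := by rw [siDerivSeq]

theorem succ (k : ℕ) (t : ℝ) (i : ι) :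
    siDerivSeq A z (k + 1) t i = (A *ᵥ siDerivSeq A z k t) i - ∑ j ∈ range (k + 1),
      (k.choose j : ℝ) * siDerivSeq A z j t i * (A *ᵥ siDerivSeq A z (k - j) t) i := by
  rw [siDerivSeq]
  dsimp only
  rw [Fin.sum_univ_eq_sum_range
    (fun j => (k.choose j : ℝ) * siDerivSeq A z j t i * (A *ᵥ siDerivSeq A z (k - j) t) i)]

theorem add_two (k : ℕ) (t : ℝ) (i : ι) : siDerivSeq A z (k + 1 + 1) t i =
    (A *ᵥ siDerivSeq A z (k + 1) t) i - ∑ j ∈ range (k + 1), (k.choose j : ℝ) *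
      (siDerivSeq A z (j + 1) t i * (A *ᵥ siDerivSeq A z (k - j) t) i +
        siDerivSeq A z j t i * (A *ᵥ siDerivSeq A z (k - j + 1) t) i) := by
  have hpascal := sum_choose_succ_mul
    (fun p q => siDerivSeq A z p t i * (A *ᵥ siDerivSeq A z q t) i) k
  simp only [← mul_assoc] at hpascal
  rw [succ, hpascal, ← sum_add_distrib]
  congr 1
  refine sum_congr rfl fun j hj => ?_
  rw [Nat.sub_add_comm (mem_range_succ_iff.1 hj)]
  ring

end siDerivSeq

namespace IsSITrajectory

variable {A : Matrix ι ι ℝ} {z : ℝ → ι → ℝ}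

theorem hasDerivWithinAt_siDerivSeq (hz : IsSITrajectory A z) (k : ℕ) (i : ι) {t : ℝ}
    (ht : t ∈ Ici (0 : ℝ)) :
    HasDerivWithinAt (fun s => siDerivSeq A z k s i) (siDerivSeq A z (k + 1) t i) (Ici 0) t := by
  induction k using Nat.strong_induction_on generalizing i with
  | _ k ih =>
  rcases k with _ | k
  · have h1 : siDerivSeq A z 1 t i = (1 - z t i) * (A *ᵥ z t) i := by
      simp only [siDerivSeq.succ, siDerivSeq.zero, zero_add, range_one, zero_tsub,
        sum_singleton, Nat.choose_self, Nat.cast_one, one_mul]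
      ring
    rw [h1, siDerivSeq.zero]
    exact hz.hasDerivWithinAt i t ht
  · rw [funext fun s => siDerivSeq.succ k s i, siDerivSeq.add_two]
    refine (hasDerivWithinAt_mulVec_apply A (ih k (by omega)) i).sub
      (HasDerivWithinAt.fun_sum fun j hj => ?_)
    have hj : j ≤ k := Nat.lt_succ_iff.mp (mem_range.1 hj)
    exact (((ih j (by omega) i).const_mul _).mul
      (hasDerivWithinAt_mulVec_apply A (ih (k - j) (by omega)) i)).congr_deriv (by ring)

theorem abs_siDerivSeq_le (hz : IsSITrajectory A z) {M : ℝ} (hA : ∀ i j, 0 ≤ A i j)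
    (hAM : ∀ i, ∑ j, A i j ≤ M) (k : ℕ) {t : ℝ} (ht : t ∈ Ici (0 : ℝ)) (i : ι) :
    |siDerivSeq A z k t i| ≤ k ! * (2 * M) ^ k := by
  induction k using Nat.strong_induction_on generalizing i with
  | _ k ih =>
  rcases k with _ | k
  · have := hz.mem_Icc t ht i
    rw [siDerivSeq.zero, abs_le]
    simp only [Nat.factorial_zero, Nat.cast_one, pow_zero, mul_one]
    exact ⟨by linarith [this.1], this.2⟩
  have hM : 0 ≤ M := (sum_nonneg fun j _ => hA i j).trans (hAM i)
  have hAv : ∀ p ≤ k, |(A *ᵥ siDerivSeq A z p t) i| ≤ M * (p ! * (2 * M) ^ p) := fun p hp =>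
    (abs_mulVec_apply_le A (fun l => ih p (by omega) l) i).trans <| by
      simp_rw [abs_of_nonneg (hA i _)]
      gcongr
      exact hAM i
  have hterm : ∀ j ∈ range (k + 1), |(k.choose j : ℝ) * siDerivSeq A z j t i *
      (A *ᵥ siDerivSeq A z (k - j) t) i| ≤ M * (k ! * (2 * M) ^ k) := by
    intro j hj
    have hj := Nat.lt_succ_iff.1 (mem_range.1 hj)
    rw [abs_mul, abs_mul, Nat.abs_cast]
    calc _ ≤ (k.choose j : ℝ) * (j ! * (2 * M) ^ j) * (M * ((k - j)! * (2 * M) ^ (k - j))) := by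
          gcongr
          exacts [ih j (by omega) i, hAv (k - j) (Nat.sub_le _ _)]
      _ = M * ((k.choose j * j ! * (k - j)! : ℕ) * (2 * M) ^ (j + (k - j))) := by
          push_cast
          ring
      _ = M * (k ! * (2 * M) ^ k) := by
          rw [Nat.choose_mul_factorial_mul_factorial hj, Nat.add_sub_cancel' hj]
  rw [siDerivSeq.succ]
  have hX : 0 ≤ (k : ℝ) * M * (k ! * (2 * M) ^ k) := by positivity
  calc _ ≤ |(A *ᵥ siDerivSeq A z k t) i| + ∑ j ∈ range (k + 1), |(k.choose j : ℝ) *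
        siDerivSeq A z j t i * (A *ᵥ siDerivSeq A z (k - j) t) i| :=
        (abs_sub _ _).trans (add_le_add le_rfl (abs_sum_le_sum_abs _ _))
    _ ≤ M * (k ! * (2 * M) ^ k) + ∑ j ∈ range (k + 1), M * (k ! * (2 * M) ^ k) :=
        add_le_add (hAv k le_rfl) (sum_le_sum hterm)
    _ ≤ (k + 1)! * (2 * M) ^ (k + 1) := by
        rw [sum_const, card_range, nsmul_eq_mul, Nat.factorial_succ, pow_succ]
        push_cast
        linarith

theorem one_sub_nonneg (hz : IsSITrajectory A z) {t : ℝ} (ht : t ∈ Ici (0 : ℝ)) (i : ι) :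
    0 ≤ 1 - z t i :=
  sub_nonneg.2 (hz.mem_Icc t ht i).2

theorem hasDerivWithinAt_one_sub (hz : IsSITrajectory A z) (i : ι) :
    ∀ t ∈ Ici (0 : ℝ), HasDerivWithinAt (fun s => 1 - z s i)
      (-((1 - z t i) * (A *ᵥ z t) i)) (Ici 0) t :=
  fun t ht => (hz.hasDerivWithinAt i t ht).const_sub 1

theorem mulVec_nonneg (hz : IsSITrajectory A z) (hA : ∀ i j, 0 ≤ A i j) {t : ℝ}
    (ht : t ∈ Ici (0 : ℝ)) (i : ι) : 0 ≤ (A *ᵥ z t) i :=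
  sum_nonneg fun j _ => mul_nonneg (hA i j) (hz.mem_Icc t ht j).1

theorem mulVec_le_sum (hz : IsSITrajectory A z) (hA : ∀ i j, 0 ≤ A i j) {t : ℝ}
    (ht : t ∈ Ici (0 : ℝ)) (i : ι) : (A *ᵥ z t) i ≤ ∑ j, A i j :=
  sum_le_sum fun j _ => mul_le_of_le_one_right (hA i j) (hz.mem_Icc t ht j).2

theorem monotoneOn (hz : IsSITrajectory A z) (hA : ∀ i j, 0 ≤ A i j) (i : ι) :
    MonotoneOn (fun t => z t i) (Ici 0) :=
  monotoneOn_Ici_of_hasDerivWithinAt_nonneg (hz.hasDerivWithinAt i)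
    fun _ ht => mul_nonneg (hz.one_sub_nonneg ht i) (hz.mulVec_nonneg hA ht i)

theorem le_mulVec_of_le_mulVec_zero (hz : IsSITrajectory A z) (hA : ∀ i j, 0 ≤ A i j) {ρ : ℝ}
    {i : ι} (hρ : ρ ≤ (A *ᵥ z 0) i) {t : ℝ} (ht : t ∈ Ici (0 : ℝ)) : ρ ≤ (A *ᵥ z t) i :=
  hρ.trans <| sum_le_sum fun j _ =>
    mul_le_mul_of_nonneg_left (hz.monotoneOn hA j self_mem_Ici ht ht) (hA i j)

theorem one_sub_zero_le_mul_exp (hz : IsSITrajectory A z) (hA : ∀ i j, 0 ≤ A i j) (i : ι)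
    {t : ℝ} (ht : t ∈ Ici (0 : ℝ)) : 1 - z 0 i ≤ (1 - z t i) * exp ((∑ j, A i j) * t) := by
  simpa using monotoneOn_mul_exp_of_le (hz.hasDerivWithinAt_one_sub i)
    (fun _ => hasDerivAt_const_mul _) (fun t ht => hz.one_sub_nonneg ht i)
    (fun t ht => hz.mulVec_le_sum hA ht i) self_mem_Ici ht ht

theorem one_sub_pos (hz : IsSITrajectory A z) (hA : ∀ i j, 0 ≤ A i j) {i : ι} (h0 : z 0 i < 1)
    {t : ℝ} (ht : t ∈ Ici (0 : ℝ)) : 0 < 1 - z t i :=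
  (mul_pos_iff_of_pos_right (exp_pos _)).1 <|
    (sub_pos.2 h0).trans_le (hz.one_sub_zero_le_mul_exp hA i ht)

theorem one_sub_le_exp (hz : IsSITrajectory A z) (hA : ∀ i j, 0 ≤ A i j) {ρ : ℝ}
    (hρ : ∀ i, ρ ≤ (A *ᵥ z 0) i) (i : ι) {t : ℝ} (ht : t ∈ Ici (0 : ℝ)) :
    1 - z t i ≤ exp (-(ρ * t)) := by
  have h := antitoneOn_mul_exp_of_le (hz.hasDerivWithinAt_one_sub i)
    (fun _ => hasDerivAt_const_mul ρ) (fun t ht => hz.one_sub_nonneg ht i)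
    (fun t ht => hz.le_mulVec_of_le_mulVec_zero hA (hρ i) ht) self_mem_Ici ht ht
  simp only [mul_zero, exp_zero, mul_one] at h
  rw [exp_neg, ← one_div, le_div_iff₀ (exp_pos _)]
  linarith [(hz.mem_Icc 0 self_mem_Ici i).1]

theorem one_sub_mul_exp_le (hz : IsSITrajectory A z) (hA : ∀ i j, 0 ≤ A i j) {ρ M : ℝ}
    (hρ0 : 0 < ρ) (hρ : ∀ i, ρ ≤ (A *ᵥ z 0) i) (hAM : ∀ i, ∑ j, A i j ≤ M) (i : ι) {t : ℝ}
    (ht : t ∈ Ici (0 : ℝ)) :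
    (1 - z t i) * exp ((∑ j, A i j) * t) ≤ (1 - z 0 i) * exp (M / ρ) := by
  -- integrating factor for `y' ≤ -(d - M e^{-ρ t}) y`, `y = 1 - z · i`, which holds because
  -- `d - (A *ᵥ z) i = (A *ᵥ (1 - z)) i ≤ M e^{-ρ t}`
  have hP : ∀ t, HasDerivAt (fun s => (∑ j, A i j) * s + M / ρ * exp (-(ρ * s)))
      ((∑ j, A i j) - M * exp (-(ρ * t))) t := fun t => by
    refine ((hasDerivAt_const_mul _).add
      ((hasDerivAt_const_mul ρ).fun_neg.exp.const_mul (M / ρ))).congr_deriv ?_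
    field_simp
    ring
  have hpr : ∀ t ∈ Ici (0 : ℝ), (∑ j, A i j) - M * exp (-(ρ * t)) ≤ (A *ᵥ z t) i := by
    intro t ht
    have hdefect : ∑ j, A i j * (1 - z t j) ≤ M * exp (-(ρ * t)) := calc
      _ ≤ ∑ j, A i j * exp (-(ρ * t)) :=
          sum_le_sum fun j _ => mul_le_mul_of_nonneg_left (hz.one_sub_le_exp hA hρ j ht) (hA i j)
      _ ≤ M * exp (-(ρ * t)) := by rw [← sum_mul]; gcongr; exact hAM i
    simp only [mul_sub, mul_one, sum_sub_distrib] at hdefect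
    exact sub_le_comm.1 hdefect
  have h := antitoneOn_mul_exp_of_le (hz.hasDerivWithinAt_one_sub i) hP
    (fun t ht => hz.one_sub_nonneg ht i) hpr self_mem_Ici ht ht
  simp only [mul_zero, zero_add, neg_zero, exp_zero, mul_one] at h
  have hM : 0 ≤ M := (hAM i).trans' (sum_nonneg fun j _ => hA i j)
  refine le_trans ?_ h
  gcongr
  · exact hz.one_sub_nonneg ht i
  · exact le_add_of_nonneg_right (by positivity)

theorem isTheta_one_sub (hz : IsSITrajectory A z) (hA : ∀ i j, 0 ≤ A i j) {ρ M : ℝ}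
    (hρ0 : 0 < ρ) (hρ : ∀ i, ρ ≤ (A *ᵥ z 0) i) (hAM : ∀ i, ∑ j, A i j ≤ M) {i : ι}
    (h0 : z 0 i < 1) :
    (fun t => 1 - z t i) =Θ[atTop] fun t => exp (-((∑ j, A i j) * t)) := by
  have hy0 : 0 < 1 - z 0 i := sub_pos.2 h0
  refine ⟨IsBigO.of_bound ((1 - z 0 i) * exp (M / ρ)) ?_,
    IsBigO.of_bound (1 - z 0 i)⁻¹ ?_⟩ <;>
    filter_upwards [eventually_ge_atTop 0] with t ht <;>
    rw [norm_of_nonneg (exp_pos _).le, norm_of_nonneg (hz.one_sub_nonneg ht i), exp_neg]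
  · rw [← div_eq_mul_inv, le_div_iff₀ (exp_pos _)]
    exact hz.one_sub_mul_exp_le hA hρ0 hρ hAM i ht
  · rw [inv_mul_eq_div, le_div_iff₀ hy0, inv_mul_le_iff₀ (exp_pos _)]
    linarith [hz.one_sub_zero_le_mul_exp hA i ht]

theorem eq_zero_of_forall_dotProduct_eq_zero (hz : IsSITrajectory A z) (hA : ∀ i j, 0 ≤ A i j)
    {ρ M : ℝ} (hρ0 : 0 < ρ) (hρ : ∀ i, ρ ≤ (A *ᵥ z 0) i) (hAM : ∀ i, ∑ j, A i j ≤ M)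
    (h0 : ∀ i, z 0 i < 1) (hdeg : Function.Injective fun i => ∑ j, A i j) {c : ι → ℝ}
    (hc : ∀ t ∈ Ici (0 : ℝ), c ⬝ᵥ z t = 0) : c = 0 := by
  have hθ := fun i => hz.isTheta_one_sub hA hρ0 hρ hAM (h0 i)
  have hdecay : ∀ i, Tendsto (fun t => 1 - z t i) atTop (𝓝 0) := fun i =>
    (hθ i).isBigO.trans_tendsto <| tendsto_exp_neg_atTop_nhds_zero.comp <|
      tendsto_id.const_mul_atTop <| hρ0.trans_le <|
        (hρ i).trans (hz.mulVec_le_sum hA self_mem_Ici i)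
  have hc' : ∀ t ∈ Ici (0 : ℝ), ∑ i, c i * (1 - z t i) = ∑ i, c i := fun t ht => by
    simpa [mul_sub, sum_sub_distrib, dotProduct] using hc t ht
  have hsum : ∑ i, c i = 0 := by
    refine tendsto_nhds_unique (tendsto_const_nhds.congr' ?_)
      (by simpa using tendsto_finsetSum univ fun i _ => (hdecay i).const_mul (c i))
    filter_upwards [eventually_ge_atTop 0] with t ht
    exact (hc' t ht).symm
  refine eq_zero_of_sum_mul_eq_zero_of_isTheta_exp hdeg hθ ?_
  filter_upwards [eventually_ge_atTop 0] with t ht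
  rw [hc' t ht, hsum]

theorem mulVec_eq_of_eqOn_Icc {A' : Matrix ι ι ℝ} {z' : ℝ → ι → ℝ} (hz : IsSITrajectory A z)
    (hz' : IsSITrajectory A' z') {T : ℝ} (hT : 0 < T) (heq : ∀ t ∈ Icc 0 T, z' t = z t)
    (hlt : ∀ t ∈ Icc 0 T, ∀ i, z t i < 1) : ∀ t ∈ Icc 0 T, A' *ᵥ z t = A *ᵥ z t := by
  intro t ht
  ext i
  have h := (hz'.hasDerivWithinAt i t ht.1).eq_of_eqOn_Icc (hz.hasDerivWithinAt i t ht.1) hT ht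
    fun s hs => congrFun (heq s hs) i
  rw [heq t ht] at h
  exact mul_left_cancel₀ (sub_ne_zero.2 (hlt t ht i).ne') h

theorem mulVec_eq_zero_of_eqOn_Icc (hz : IsSITrajectory A z) (hA : ∀ i j, 0 ≤ A i j) {M : ℝ}
    (hM : 0 < M) (hAM : ∀ i, ∑ j, A i j ≤ M) {D : Matrix ι ι ℝ} {T : ℝ} (hT : 0 < T)
    (hD : ∀ t ∈ Icc 0 T, D *ᵥ z t = 0) : ∀ t ∈ Ici (0 : ℝ), D *ᵥ z t = 0 := by
  intro t ht
  ext i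
  have h := chain_eqOn_zero_Ici (g := fun k t => (D *ᵥ siDerivSeq A z k t) i)
    (C := ∑ j, |D i j|) (B := 2 * M)
    (fun k s hs => hasDerivWithinAt_mulVec_apply D
      (fun j => hz.hasDerivWithinAt_siDerivSeq k j hs) i)
    (by positivity)
    (fun k s hs => (abs_mulVec_apply_le D (hz.abs_siDerivSeq_le hA hAM k hs) i).trans_eq
      (mul_assoc _ _ _).symm)
    hT (fun s hs => by simp [siDerivSeq.zero, hD s hs]) ht
  simpa [siDerivSeq.zero] using h

end IsSITrajectory

theorem stmt_8_general {n : ℕ} (m M : ℝ) (hm : 0 < m) (hmM : m ≤ M)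
    (W : Matrix (Fin n) (Fin n) ℝ) (pv : Fin n → ℝ)
    (z : ℝ → Fin n → ℝ)
    (hWb : ∀ i j, W i j ∈ Set.Icc m M)
    (hz0 : ∀ i, z 0 i ∈ Set.Icc m (1 - m))
    (hpv : ∀ i, 0 < pv i) (hpv1 : ∑ i, pv i = 1)
    (hode : ∀ i, ∀ t ∈ Set.Ici (0 : ℝ), HasDerivWithinAt (fun s => z s i)
      ((1 - z t i) * (∑ j, W i j * pv j * z t j)) (Set.Ici 0) t)
    (hz01 : ∀ t ∈ Set.Ici (0 : ℝ), ∀ i, z t i ∈ Set.Icc (0 : ℝ) 1)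
    (hdeg : ∀ i j : Fin n, i ≠ j → (∑ k, W i k * pv k) ≠ ∑ k, W j k * pv k) :
    ∀ T₀ : ℝ, 0 < T₀ →
      ∀ (W' : Matrix (Fin n) (Fin n) ℝ) (z' : ℝ → Fin n → ℝ),
        W'.IsSymm → (∀ i j, W' i j ∈ Set.Icc m M) →
        (∀ i, ∀ t ∈ Set.Ici (0 : ℝ), HasDerivWithinAt (fun s => z' s i)
          ((1 - z' t i) * (∑ j, W' i j * pv j * z' t j)) (Set.Ici 0) t) →
        (∀ t ∈ Set.Ici (0 : ℝ), ∀ i, z' t i ∈ Set.Icc (0 : ℝ) 1) →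
        (∀ t ∈ Set.Icc (0 : ℝ) T₀, z' t = z t) →
        W' = W := by
  intro T₀ hT₀ W' z' _ _ hode' hz01' hagree
  set A : Matrix (Fin n) (Fin n) ℝ := Matrix.of fun i j => W i j * pv j
  set A' : Matrix (Fin n) (Fin n) ℝ := Matrix.of fun i j => W' i j * pv j
  have hz : IsSITrajectory A z := ⟨hode, hz01⟩
  have hA : ∀ i j, 0 ≤ A i j := fun i j => mul_nonneg (hm.le.trans (hWb i j).1) (hpv j).le
  have hAM : ∀ i, ∑ j, A i j ≤ M := fun i => calc
    ∑ j, A i j ≤ ∑ j, M * pv j :=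
      sum_le_sum fun j _ => mul_le_mul_of_nonneg_right (hWb i j).2 (hpv j).le
    _ = M := by rw [← mul_sum, hpv1, mul_one]
  have hρ : ∀ i, m * m ≤ (A *ᵥ z 0) i := fun i => calc
    m * m = ∑ j, m * pv j * m := by rw [← sum_mul, ← mul_sum, hpv1, mul_one]
    _ ≤ ∑ j, W i j * pv j * z 0 j := sum_le_sum fun j _ =>
      mul_le_mul (mul_le_mul_of_nonneg_right (hWb i j).1 (hpv j).le) (hz0 j).1 hm.le (hA i j)
  have h0 : ∀ i, z 0 i < 1 := fun i => (hz0 i).2.trans_lt (sub_lt_self 1 hm)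
  have hagreeA := hz.mulVec_eq_of_eqOn_Icc (A' := A') ⟨hode', hz01'⟩ hT₀ hagree
    fun t ht i => sub_pos.1 (hz.one_sub_pos hA (h0 i) ht.1)
  have hvanish := hz.mulVec_eq_zero_of_eqOn_Icc hA (hm.trans_le hmM) hAM (D := A' - A) hT₀
    fun t ht => by rw [sub_mulVec, hagreeA t ht, sub_self]
  have hdeg' : Function.Injective fun i => ∑ j, A i j := fun i j h =>
    by_contra fun hij => hdeg i j hij h
  ext i j
  have hrow := hz.eq_zero_of_forall_dotProduct_eq_zero hA (mul_pos hm hm) hρ hAM h0 hdeg'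
    fun t ht => congrFun (hvanish t ht) i
  have hij : (W' i j - W i j) * pv j = 0 := by
    simpa [A, A', sub_mul] using congrFun hrow j
  exact sub_eq_zero.1 ((mul_eq_zero.1 hij).resolve_right (hpv j).ne')

/-- SI model (`γ = 0`) with all degrees `d_i = Σ_j w_{ij} π_j` pairwise distinct:
`W` is reconstructible. If a symmetric `Ŵ` with entries in `[m,M]` produces a
trajectory (same initial condition) agreeing with `z` on some `[0,T₀]`, `T₀ > 0`,
then `Ŵ = W`. -/
theorem stmt_8 {n : ℕ} (m M : ℝ) (hm : 0 < m) (hm2 : m ≤ 1 / 2) (hmM : m ≤ M)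
    (W : Matrix (Fin n) (Fin n) ℝ) (pv : Fin n → ℝ)
    (z : ℝ → Fin n → ℝ)
    (hWsymm : W.IsSymm) (hWb : ∀ i j, W i j ∈ Set.Icc m M)
    (hz0 : ∀ i, z 0 i ∈ Set.Icc m (1 - m))
    (hpv : ∀ i, 0 < pv i) (hpv1 : ∑ i, pv i = 1)
    (hode : ∀ i, ∀ t ∈ Set.Ici (0 : ℝ), HasDerivWithinAt (fun s => z s i)
      ((1 - z t i) * (∑ j, W i j * pv j * z t j)) (Set.Ici 0) t)
    (hz01 : ∀ t ∈ Set.Ici (0 : ℝ), ∀ i, z t i ∈ Set.Icc (0 : ℝ) 1)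
    (hdeg : ∀ i j : Fin n, i ≠ j → (∑ k, W i k * pv k) ≠ ∑ k, W j k * pv k) :
    ∀ T₀ : ℝ, 0 < T₀ →
      ∀ (W' : Matrix (Fin n) (Fin n) ℝ) (z' : ℝ → Fin n → ℝ),
        W'.IsSymm → (∀ i j, W' i j ∈ Set.Icc m M) →
        (∀ i, ∀ t ∈ Set.Ici (0 : ℝ), HasDerivWithinAt (fun s => z' s i)
          ((1 - z' t i) * (∑ j, W' i j * pv j * z' t j)) (Set.Ici 0) t) →
        (∀ t ∈ Set.Ici (0 : ℝ), ∀ i, z' t i ∈ Set.Icc (0 : ℝ) 1) →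
        (∀ t ∈ Set.Icc (0 : ℝ) T₀, z' t = z t) →
        W' = W :=
  stmt_8_general m M hm hmM W pv z hWb hz0 hpv hpv1 hode hz01 hdeg
end

section
/- Let 0 < m ≤ 1/2, m ≤ M, and let p = (W, z(0), 0, π) be SI parameters (γ = 0) with m ≤ w_{ij} = w_{ji} ≤ M and m ≤ z_i(0) ≤ 1−m for all i, j, and Σ_i π_i = 1 with π_i ≥ 0. Then for every community i, the degree is observable in the long-time limit: lim_{t → ∞} −(1/t)·log(1 − z_i(t)) = d_i, where d_i = Σ_j (WΠ)_{ij}. -/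
/-!
Write `g_i = (A z)_i`. The equation for `1 - z_i` is linear, `(1 - z_i)' = -g_i (1 - z_i)`, so
`1 - z_i(t) = (1 - z_i(0)) exp (-∫₀ᵗ g_i)` and `-(1/t) log (1 - z_i(t))` is, up to `O(1/t)`, the
time average of `g_i`. The trajectory is nondecreasing, so `z ≥ m` and `g_j ≥ m²` for all `j`.
Hence `g_i' = Σ_j a_ij (1 - z_j) g_j ≥ m² (d_i - g_i)`: the deficit `d_i - g_i ≥ 0` has integral at
most `d_i / m²` over `[0, ∞)`, and the time average of `g_i` tends to `d_i`.
-/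

open Filter Set Real

section LinearODE

variable {a : ℝ} {u g : ℝ → ℝ}

theorem hasDerivWithinAt_integral_Ici (hg : ContinuousOn g (Ici a)) {x : ℝ} (hx : a ≤ x) :
    HasDerivWithinAt (fun t => ∫ s in a..t, g s) (g x) (Ici x) x := by
  have hsub : Ioi x ⊆ Ici a := fun y hy => hx.trans hy.le
  refine intervalIntegral.integral_hasDerivWithinAt_right (t := Ioi x) ?_ ?_ ?_
  · exact (hg.mono (uIcc_of_le hx ▸ Icc_subset_Ici_self)).intervalIntegrable
  · exact (hg.mono hsub).stronglyMeasurableAtFilter_nhdsWithin measurableSet_Ioi x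
  · exact (hg x hx).mono hsub

theorem continuousOn_integral_Icc (hg : ContinuousOn g (Ici a)) (t : ℝ) :
    ContinuousOn (fun x => ∫ s in a..x, g s) (Icc a t) := by
  rcases le_total a t with hat | hta
  · have hint : MeasureTheory.IntegrableOn g (uIcc a t) := by
      rw [uIcc_of_le hat]
      exact (hg.mono Icc_subset_Ici_self).integrableOn_Icc
    simpa only [uIcc_of_le hat] using intervalIntegral.continuousOn_primitive_interval hint
  · exact (subsingleton_Icc_of_ge hta).continuousOn _

/-- Variation of constants: `u · exp (∫ g)` has zero right derivative. -/
theorem eq_mul_exp_neg_integral_of_hasDerivWithinAt (hg : ContinuousOn g (Ici a))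
    (hu : ∀ t ∈ Ici a, HasDerivWithinAt u (-(g t * u t)) (Ici a) t) {t : ℝ} (ht : a ≤ t) :
    u t = u a * exp (-∫ s in a..t, g s) := by
  set G := fun x => ∫ s in a..x, g s
  have hcont : ContinuousOn (fun x => u x * exp (G x)) (Icc a t) :=
    ContinuousOn.mul (fun x hx => (hu x hx.1).continuousWithinAt.mono Icc_subset_Ici_self)
      (continuous_exp.comp_continuousOn (continuousOn_integral_Icc hg t))
  have hderiv : ∀ x ∈ Ico a t, HasDerivWithinAt (fun x => u x * exp (G x)) 0 (Ici x) x := by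
    intro x hx
    have hux := (hu x hx.1).mono (Ici_subset_Ici.2 hx.1)
    have hGx := (hasDerivWithinAt_integral_Ici hg hx.1).exp
    exact (hux.mul hGx).congr_deriv (by ring)
  have hconst := constant_of_has_deriv_right_zero hcont hderiv t (right_mem_Icc.2 ht)
  simp only [G, intervalIntegral.integral_same, exp_zero, mul_one] at hconst
  rw [exp_neg, ← hconst, mul_assoc, mul_inv_cancel₀ (exp_pos _).ne', mul_one]

end LinearODE

theorem tendsto_div_atTop_of_abs_sub_mul_le {F : ℝ → ℝ} {d C : ℝ}
    (h : ∀ᶠ t in atTop, |F t - d * t| ≤ C) : Tendsto (fun t => F t / t) atTop (nhds d) := by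
  have hC : Tendsto (fun t : ℝ => C / t) atTop (nhds 0) := tendsto_const_nhds.div_atTop tendsto_id
  rw [tendsto_iff_norm_sub_tendsto_zero]
  refine squeeze_zero' (Eventually.of_forall fun _ => norm_nonneg _) ?_ hC
  filter_upwards [h, eventually_gt_atTop 0] with t ht htpos
  rw [norm_eq_abs, ← mul_div_cancel_right₀ d htpos.ne', ← sub_div, abs_div, abs_of_pos htpos]
  gcongr

namespace SI

variable {ι : Type*} [Fintype ι] {W : Matrix ι ι ℝ} {pv : ι → ℝ}

def degree (W : Matrix ι ι ℝ) (pv : ι → ℝ) (i : ι) : ℝ := ∑ j, W i j * pv j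

/-- The infection pressure `(A x)_i`, `A = WΠ`. -/
def pressure (W : Matrix ι ι ℝ) (pv : ι → ℝ) (x : ι → ℝ) (i : ι) : ℝ := ∑ j, W i j * pv j * x j

theorem pressure_nonneg (hW : ∀ i j, 0 ≤ W i j) (hpv : ∀ j, 0 ≤ pv j) {x : ι → ℝ}
    (hx : ∀ j, 0 ≤ x j) (i : ι) : 0 ≤ pressure W pv x i :=
  Finset.sum_nonneg fun j _ => mul_nonneg (mul_nonneg (hW i j) (hpv j)) (hx j)

theorem degree_sub_pressure (x : ι → ℝ) (i : ι) :
    degree W pv i - pressure W pv x i = pressure W pv (fun j => 1 - x j) i := by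
  simp only [degree, pressure, ← Finset.sum_sub_distrib, mul_sub, mul_one]

theorem pressure_le_degree (hW : ∀ i j, 0 ≤ W i j) (hpv : ∀ j, 0 ≤ pv j) {x : ι → ℝ}
    (hx : ∀ j, x j ≤ 1) (i : ι) : pressure W pv x i ≤ degree W pv i :=
  Finset.sum_le_sum fun j _ => mul_le_of_le_one_right (mul_nonneg (hW i j) (hpv j)) (hx j)

theorem mul_mul_sum_le_pressure {a b : ℝ} {i : ι} (ha₀ : 0 ≤ a) (ha : ∀ j, a ≤ W i j)
    (hpv : ∀ j, 0 ≤ pv j) {x : ι → ℝ} (hb₀ : 0 ≤ b) (hb : ∀ j, b ≤ x j) :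
    a * b * ∑ j, pv j ≤ pressure W pv x i := by
  rw [Finset.mul_sum]
  refine Finset.sum_le_sum fun j _ => ?_
  calc a * b * pv j = a * pv j * b := by ring
    _ ≤ W i j * pv j * x j :=
      mul_le_mul (mul_le_mul_of_nonneg_right (ha j) (hpv j)) (hb j) hb₀
        (mul_nonneg (ha₀.trans (ha j)) (hpv j))

structure IsTrajectory (W : Matrix ι ι ℝ) (pv : ι → ℝ) (z : ℝ → ι → ℝ) : Prop where
  hasDerivWithinAt : ∀ i, ∀ t ∈ Ici (0 : ℝ),
    HasDerivWithinAt (fun s => z s i) ((1 - z t i) * pressure W pv (z t) i) (Ici 0) t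
  mem_Icc : ∀ t ∈ Ici (0 : ℝ), ∀ i, z t i ∈ Icc (0 : ℝ) 1

namespace IsTrajectory

variable {z : ℝ → ι → ℝ}

theorem continuousOn (hz : IsTrajectory W pv z) (i : ι) :
    ContinuousOn (fun s => z s i) (Ici 0) :=
  fun t ht => (hz.hasDerivWithinAt i t ht).continuousWithinAt

theorem continuousOn_pressure (hz : IsTrajectory W pv z) (i : ι) :
    ContinuousOn (fun s => pressure W pv (z s) i) (Ici 0) :=
  continuousOn_finsetSum _ fun j _ => continuousOn_const.mul (hz.continuousOn j)

theorem hasDerivWithinAt_pressure (hz : IsTrajectory W pv z) (i : ι) {t : ℝ} (ht : t ∈ Ici 0) :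
    HasDerivWithinAt (fun s => pressure W pv (z s) i)
      (∑ j, W i j * pv j * ((1 - z t j) * pressure W pv (z t) j)) (Ici 0) t :=
  HasDerivWithinAt.fun_sum fun j _ => (hz.hasDerivWithinAt j t ht).const_mul _

theorem monotoneOn (hz : IsTrajectory W pv z) (hW : ∀ i j, 0 ≤ W i j) (hpv : ∀ j, 0 ≤ pv j)
    (i : ι) : MonotoneOn (fun s => z s i) (Ici 0) := by
  refine monotoneOn_of_hasDerivWithinAt_nonneg (f' := fun t => (1 - z t i) * pressure W pv (z t) i)
    (convex_Ici 0) (hz.continuousOn i) (fun t ht => ?_) (fun t ht => ?_)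
  · rw [interior_Ici] at ht ⊢
    exact (hz.hasDerivWithinAt i t (Ioi_subset_Ici_self ht)).mono Ioi_subset_Ici_self
  · rw [interior_Ici] at ht
    have hzt := hz.mem_Icc t (Ioi_subset_Ici_self ht)
    exact mul_nonneg (sub_nonneg.2 (hzt i).2) (pressure_nonneg hW hpv (fun j => (hzt j).1) i)

theorem one_sub_eq_mul_exp (hz : IsTrajectory W pv z) (i : ι) {t : ℝ} (ht : 0 ≤ t) :
    1 - z t i = (1 - z 0 i) * exp (-∫ s in 0..t, pressure W pv (z s) i) :=
  eq_mul_exp_neg_integral_of_hasDerivWithinAt (u := fun s => 1 - z s i) (hz.continuousOn_pressure i)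
    (fun s hs => ((hz.hasDerivWithinAt i s hs).const_sub 1).congr_deriv (by ring)) ht

theorem mul_integral_degree_sub_pressure_le (hz : IsTrajectory W pv z) (hW : ∀ i j, 0 ≤ W i j)
    (hpv : ∀ j, 0 ≤ pv j) {c : ℝ} (hpress : ∀ s ∈ Ici (0 : ℝ), ∀ j, c ≤ pressure W pv (z s) j)
    (i : ι) {t : ℝ} (ht : 0 ≤ t) :
    c * ∫ s in 0..t, (degree W pv i - pressure W pv (z s) i) ≤
      pressure W pv (z t) i - pressure W pv (z 0) i := by
  have hcont : ContinuousOn (fun s => pressure W pv (z s) i) (Icc 0 t) :=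
    (hz.continuousOn_pressure i).mono Icc_subset_Ici_self
  rw [← intervalIntegral.integral_const_mul]
  refine intervalIntegral.integral_le_sub_of_hasDeriv_right_of_le ht hcont
    (fun x hx => (hz.hasDerivWithinAt_pressure i hx.1.le).mono (Ioi_subset_Ici hx.1.le))
    ((continuousOn_const.mul (continuousOn_const.sub hcont)).integrableOn_Icc) (fun x hx => ?_)
  have hzx := hz.mem_Icc x hx.1.le
  rw [degree_sub_pressure, pressure, Finset.mul_sum]
  refine Finset.sum_le_sum fun j _ => ?_
  calc c * (W i j * pv j * (1 - z x j)) = W i j * pv j * (1 - z x j) * c := by ring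
    _ ≤ W i j * pv j * (1 - z x j) * pressure W pv (z x) j :=
      mul_le_mul_of_nonneg_left (hpress x hx.1.le j)
        (mul_nonneg (mul_nonneg (hW i j) (hpv j)) (sub_nonneg.2 (hzx j).2))
    _ = W i j * pv j * ((1 - z x j) * pressure W pv (z x) j) := by ring

theorem abs_integral_pressure_sub_le (hz : IsTrajectory W pv z) (hW : ∀ i j, 0 ≤ W i j)
    (hpv : ∀ j, 0 ≤ pv j) {c : ℝ} (hc : 0 < c)
    (hpress : ∀ s ∈ Ici (0 : ℝ), ∀ j, c ≤ pressure W pv (z s) j) (i : ι) {t : ℝ} (ht : 0 ≤ t) :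
    |(∫ s in 0..t, pressure W pv (z s) i) - degree W pv i * t| ≤ degree W pv i / c := by
  have hint : IntervalIntegrable (fun s => pressure W pv (z s) i) MeasureTheory.volume 0 t :=
    ((hz.continuousOn_pressure i).mono (uIcc_of_le ht ▸ Icc_subset_Ici_self)).intervalIntegrable
  have hle : ∀ s ∈ Ici (0 : ℝ), pressure W pv (z s) i ≤ degree W pv i := fun s hs =>
    pressure_le_degree hW hpv (fun j => (hz.mem_Icc s hs j).2) i
  have hupper : (∫ s in 0..t, pressure W pv (z s) i) ≤ degree W pv i * t := by
    simpa [mul_comm] using intervalIntegral.integral_mono_on ht hint intervalIntegrable_const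
      (fun s hs => hle s hs.1)
  have hlower := hz.mul_integral_degree_sub_pressure_le hW hpv hpress i ht
  rw [intervalIntegral.integral_sub intervalIntegrable_const hint,
    intervalIntegral.integral_const, smul_eq_mul, sub_zero] at hlower
  have hz0 := pressure_nonneg hW hpv (fun j => (hz.mem_Icc 0 self_mem_Ici j).1) i
  rw [abs_sub_comm, abs_of_nonneg (sub_nonneg.2 hupper), le_div_iff₀ hc]
  nlinarith [hle t ht]

end IsTrajectory

end SI

theorem stmt_10_general {n : ℕ} (m M : ℝ) (hm : 0 < m)
    (W : Matrix (Fin n) (Fin n) ℝ) (pv : Fin n → ℝ)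
    (z : ℝ → Fin n → ℝ)
    (hWb : ∀ i j, W i j ∈ Set.Icc m M)
    (hz0 : ∀ i, z 0 i ∈ Set.Icc m (1 - m))
    (hpv : ∀ i, 0 ≤ pv i) (hpv1 : ∑ i, pv i = 1)
    (hode : ∀ i, ∀ t ∈ Set.Ici (0 : ℝ), HasDerivWithinAt (fun s => z s i)
      ((1 - z t i) * (∑ j, W i j * pv j * z t j)) (Set.Ici 0) t)
    (hz01 : ∀ t ∈ Set.Ici (0 : ℝ), ∀ i, z t i ∈ Set.Icc (0 : ℝ) 1) :
    ∀ i : Fin n,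
      Tendsto (fun t : ℝ => -(1 / t) * Real.log (1 - z t i)) atTop
        (nhds (∑ j, W i j * pv j)) := by
  intro i
  have hz : SI.IsTrajectory W pv z := ⟨hode, hz01⟩
  have hW : ∀ i j, 0 ≤ W i j := fun i j => hm.le.trans (hWb i j).1
  have hzm : ∀ t ∈ Ici (0 : ℝ), ∀ j, m ≤ z t j := fun t ht j =>
    (hz0 j).1.trans (hz.monotoneOn hW hpv j self_mem_Ici ht ht)
  have hpress : ∀ t ∈ Ici (0 : ℝ), ∀ j, m ^ 2 ≤ SI.pressure W pv (z t) j := fun t ht j => by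
    simpa [hpv1, sq] using
      SI.mul_mul_sum_le_pressure hm.le (fun k => (hWb j k).1) hpv hm.le (hzm t ht)
  have hI := tendsto_div_atTop_of_abs_sub_mul_le <| eventually_ge_atTop 0 |>.mono fun t ht =>
    hz.abs_integral_pressure_sub_le hW hpv (by positivity) hpress i ht
  have hz0i : 0 < 1 - z 0 i := by linarith [(hz0 i).2]
  have hlim := hI.sub ((tendsto_const_nhds (x := log (1 - z 0 i))).div_atTop tendsto_id)
  rw [sub_zero] at hlim
  refine hlim.congr' ?_
  filter_upwards [eventually_ge_atTop 0] with t ht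
  rw [hz.one_sub_eq_mul_exp i ht, log_mul hz0i.ne' (exp_pos _).ne', log_exp, id_eq]
  ring

/-- In the SI model (`γ = 0`) the degrees are observable in the long-time limit:
`lim_{t → ∞} −(1/t) log(1 − z_i(t)) = d_i` where `d_i = Σ_j w_{ij} π_j`. -/
theorem stmt_10 {n : ℕ} (m M : ℝ) (hm : 0 < m) (hm2 : m ≤ 1 / 2) (hmM : m ≤ M)
    (W : Matrix (Fin n) (Fin n) ℝ) (pv : Fin n → ℝ)
    (z : ℝ → Fin n → ℝ)
    (hWsymm : W.IsSymm) (hWb : ∀ i j, W i j ∈ Set.Icc m M)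
    (hz0 : ∀ i, z 0 i ∈ Set.Icc m (1 - m))
    (hpv : ∀ i, 0 ≤ pv i) (hpv1 : ∑ i, pv i = 1)
    (hode : ∀ i, ∀ t ∈ Set.Ici (0 : ℝ), HasDerivWithinAt (fun s => z s i)
      ((1 - z t i) * (∑ j, W i j * pv j * z t j)) (Set.Ici 0) t)
    (hz01 : ∀ t ∈ Set.Ici (0 : ℝ), ∀ i, z t i ∈ Set.Icc (0 : ℝ) 1) :
    ∀ i : Fin n,
      Tendsto (fun t : ℝ => -(1 / t) * Real.log (1 - z t i)) atTop
        (nhds (∑ j, W i j * pv j)) :=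
  stmt_10_general m M hm W pv z hWb hz0 hpv hpv1 hode hz01
end
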